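/- arXiv:2602.23502 — 13 statements merged into one kernel-verified Lean document; each statement's English description precedes it below -/
import Mathlib

section
/- Let (L, •, N) be an irreducible NIM-rep of the Jordan–Larson fusion ring R_{p,G}. Then for every k ∈ {1,…,p−1} and every ℓ ∈ L, the support of the action of X_k on ℓ is contained in a single G-orbit: if ℓ', ℓ'' ∈ L satisfy N_k(ℓ, ℓ') > 0 and N_k(ℓ, ℓ'') > 0, then ℓ' and ℓ'' lie in the same orbit of the G-action on L. -/
open scoped BigOperators

/-- A NIM-rep of the Jordan–Larson fusion ring `R_{p,G}`: a finite set `L` with a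
`G`-action together with multiplicity functions `N k : L → L → ℕ` for `1 ≤ k ≤ p-1`
(indices read modulo `p`), satisfying the axioms coming from the fusion rules. -/
structure JLNimRep (p : ℕ) (G : Type*) [Group G] [Fintype G]
    (L : Type*) [Fintype L] [MulAction G L] where
  N : ℕ → L → L → ℕ
  smul_left : ∀ (k : ℕ), 1 ≤ k → k ≤ p - 1 → ∀ (g : G) (ℓ ℓ' : L),
    N k (g • ℓ) ℓ' = N k ℓ ℓ'
  smul_right : ∀ (k : ℕ), 1 ≤ k → k ≤ p - 1 → ∀ (g : G) (ℓ ℓ' : L),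
    N k ℓ (g • ℓ') = N k ℓ ℓ'
  dual_symm : ∀ (k : ℕ), 1 ≤ k → k ≤ p - 1 → ∀ (ℓ ℓ' : L),
    N k ℓ ℓ' = N (p - k) ℓ' ℓ
  fusion : ∀ (i j : ℕ), 1 ≤ i → i ≤ p - 1 → 1 ≤ j → j ≤ p - 1 → (i + j) % p ≠ 0 →
    ∀ (ℓ ℓ' : L), ∑ t : L, N j ℓ t * N i t ℓ' =
      Nat.sqrt (Fintype.card G) * N ((i + j) % p) ℓ ℓ'
  fusion_dual : ∀ (i : ℕ), 1 ≤ i → i ≤ p - 1 → ∀ (ℓ ℓ' : L),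
    ∑ t : L, N i ℓ t * N (p - i) t ℓ' = Nat.card {g : G // g • ℓ = ℓ'}

/-- Irreducibility of a NIM-rep: the only nonempty subset closed under the `G`-action
and under the supports of all `N k` (`1 ≤ k ≤ p-1`) is the whole set. -/
def JLNimRep.Irreducible {p : ℕ} {G : Type*} [Group G] [Fintype G]
    {L : Type*} [Fintype L] [MulAction G L] (M : JLNimRep p G L) : Prop :=
  ∀ S : Set L, S.Nonempty →
    (∀ (g : G) (ℓ : L), ℓ ∈ S → g • ℓ ∈ S) →
    (∀ (k : ℕ), 1 ≤ k → k ≤ p - 1 → ∀ (ℓ ℓ' : L), ℓ ∈ S → 0 < M.N k ℓ ℓ' → ℓ' ∈ S) →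
    S = Set.univ

/-- for an irreducible NIM-rep of `R_{p,G}`, the support of the action of
`X_k` on any `ℓ` is contained in a single `G`-orbit. -/
theorem stmt0 (p : ℕ) (hp : 2 ≤ p) (G : Type*) [Group G] [Fintype G]
    (hG : IsSquare (Fintype.card G))
    (L : Type*) [Fintype L] [Nonempty L] [MulAction G L]
    (M : JLNimRep p G L) (hirr : M.Irreducible)
    (k : ℕ) (hk1 : 1 ≤ k) (hk2 : k ≤ p - 1) (ℓ ℓ' ℓ'' : L)
    (h' : 0 < M.N k ℓ ℓ') (h'' : 0 < M.N k ℓ ℓ'') :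
    ℓ'' ∈ MulAction.orbit G ℓ' := by
  have hkp : k ≤ p := by omega
  have h1 : 1 ≤ p - k := by omega
  have h2 : p - k ≤ p - 1 := by omega
  have hd := M.fusion_dual (p - k) h1 h2 ℓ' ℓ''
  rw [Nat.sub_sub_self hkp] at hd
  have hterm : 0 < M.N (p - k) ℓ' ℓ * M.N k ℓ ℓ'' := by
    have hsym := M.dual_symm k hk1 hk2 ℓ ℓ'
    exact Nat.mul_pos (by rw [← hsym]; exact h') h''
  have hsum : 0 < ∑ t : L, M.N (p - k) ℓ' t * M.N k t ℓ'' :=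
    lt_of_lt_of_le hterm
      (Finset.single_le_sum (f := fun t => M.N (p - k) ℓ' t * M.N k t ℓ'')
        (fun t _ => Nat.zero_le _) (Finset.mem_univ ℓ))
  rw [hd] at hsum
  obtain ⟨⟨g, hg⟩, -⟩ := Nat.card_pos_iff.mp hsum
  exact ⟨g, hg⟩
end

section
/- Let (L, •, N) be an irreducible NIM-rep of the Jordan–Larson fusion ring R_{p,G} whose G-action has at least two orbits, and let k ∈ {1,…,p−1} with gcd(k, p) = 1. Then X_k cannot fix any orbit: N_k(ℓ, ℓ') = 0 whenever ℓ and ℓ' lie in the same G-orbit of L. -/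
open scoped BigOperators

/-!
If `X_k` had a positive diagonal entry `N_k(ℓ, ℓ)`, the fusion rules would make
`N_{ck}(ℓ, ℓ)` positive for every `c`, and since `k` is invertible modulo `p` this means
`N_j(ℓ, ℓ) > 0` for all `j`. By the rule `X_j X_{p-j} = Σ_g g`, every `N_m`-neighbour of the
orbit of `ℓ` then lies in that orbit, so the orbit is a sub-NIM-rep; irreducibility makes it
all of `L`, contradicting the existence of a second orbit.
-/

open MulAction

namespace JLNimRep

variable {p : ℕ} {G : Type*} [Group G] [Fintype G] {L : Type*} [Fintype L] [MulAction G L]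
  (M : JLNimRep p G L)

theorem N_mod_add_pos {i j : ℕ} (hi1 : 1 ≤ i) (hi2 : i ≤ p - 1) (hj1 : 1 ≤ j) (hj2 : j ≤ p - 1)
    (hij : (i + j) % p ≠ 0) {ℓ t ℓ' : L} (hj : 0 < M.N j ℓ t) (hi : 0 < M.N i t ℓ') :
    0 < M.N ((i + j) % p) ℓ ℓ' := by
  have hsum : 0 < ∑ s : L, M.N j ℓ s * M.N i s ℓ' :=
    lt_of_lt_of_le (Nat.mul_pos hj hi)
      (Finset.single_le_sum (f := fun s => M.N j ℓ s * M.N i s ℓ')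
        (fun _ _ => Nat.zero_le _) (Finset.mem_univ t))
  rw [M.fusion i j hi1 hi2 hj1 hj2 hij] at hsum
  exact Nat.pos_of_mul_pos_left hsum

theorem mem_orbit_of_N_pos {i : ℕ} (hi1 : 1 ≤ i) (hi2 : i ≤ p - 1) {ℓ t ℓ' : L}
    (hi : 0 < M.N i ℓ t) (hpi : 0 < M.N (p - i) t ℓ') : ℓ' ∈ orbit G ℓ := by
  have hsum : 0 < ∑ s : L, M.N i ℓ s * M.N (p - i) s ℓ' :=
    lt_of_lt_of_le (Nat.mul_pos hi hpi)
      (Finset.single_le_sum (f := fun s => M.N i ℓ s * M.N (p - i) s ℓ')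
        (fun _ _ => Nat.zero_le _) (Finset.mem_univ t))
  rw [M.fusion_dual i hi1 hi2] at hsum
  obtain ⟨⟨g, hg⟩⟩ := (Nat.card_pos_iff.mp hsum).1
  exact ⟨g, hg⟩

theorem N_mul_mod_self_pos {k : ℕ} (hk1 : 1 ≤ k) (hk2 : k ≤ p - 1) (hkp : Nat.gcd k p = 1)
    {ℓ : L} (hℓ : 0 < M.N k ℓ ℓ) {c : ℕ} (hc1 : 1 ≤ c) (hcp : c < p) :
    0 < M.N (c * k % p) ℓ ℓ := by
  have hmul_mod_ne_zero : ∀ m, 1 ≤ m → m < p → m * k % p ≠ 0 := fun m hm1 hmp h =>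
    Nat.not_dvd_of_pos_of_lt hm1 hmp
      ((Nat.coprime_comm.mp hkp).dvd_of_dvd_mul_right (Nat.dvd_of_mod_eq_zero h))
  induction c, hc1 using Nat.le_induction with
  | base => rwa [one_mul, Nat.mod_eq_of_lt (by omega)]
  | succ n hn ih =>
    have hmod : (n * k % p + k) % p = (n + 1) * k % p := by
      rw [Nat.add_mul, one_mul, Nat.mod_add_mod]
    rw [← hmod]
    exact M.N_mod_add_pos (Nat.one_le_iff_ne_zero.mpr (hmul_mod_ne_zero n hn (by omega)))
      (Nat.le_sub_one_of_lt (Nat.mod_lt _ (by omega))) hk1 hk2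
      (hmod ▸ hmul_mod_ne_zero (n + 1) (by omega) hcp) hℓ (ih (by omega))

theorem N_self_pos_of_N_self_pos {k : ℕ} (hk1 : 1 ≤ k) (hk2 : k ≤ p - 1)
    (hkp : Nat.gcd k p = 1) {ℓ : L} (hℓ : 0 < M.N k ℓ ℓ) {j : ℕ} (hj1 : 1 ≤ j)
    (hj2 : j ≤ p - 1) : 0 < M.N j ℓ ℓ := by
  obtain ⟨c, hcp, hkc⟩ := Nat.exists_mul_mod_eq_of_coprime j hkp (by omega)
  rw [Nat.mod_eq_of_lt (by omega : j < p), mul_comm] at hkc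
  have hc1 : 1 ≤ c := Nat.one_le_iff_ne_zero.mpr fun hc0 => by simp [hc0] at hkc; omega
  exact hkc ▸ M.N_mul_mod_self_pos hk1 hk2 hkp hℓ hc1 hcp

theorem mem_orbit_of_N_self_pos {ℓ : L} (hℓ : ∀ j, 1 ≤ j → j ≤ p - 1 → 0 < M.N j ℓ ℓ)
    {m : ℕ} (hm1 : 1 ≤ m) (hm2 : m ≤ p - 1) {x t : L} (hx : x ∈ orbit G ℓ)
    (hxt : 0 < M.N m x t) : t ∈ orbit G ℓ := by
  obtain ⟨g, rfl⟩ := hx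
  rw [M.smul_left m hm1 hm2, ← Nat.sub_sub_self (show m ≤ p by omega)] at hxt
  exact M.mem_orbit_of_N_pos (by omega) (by omega) (hℓ (p - m) (by omega) (by omega)) hxt

theorem Irreducible.orbit_eq_univ {M : JLNimRep p G L} (hirr : M.Irreducible) {ℓ : L}
    (hclosed : ∀ m, 1 ≤ m → m ≤ p - 1 → ∀ x t : L, x ∈ orbit G ℓ → 0 < M.N m x t →
      t ∈ orbit G ℓ) :
    orbit G ℓ = Set.univ :=
  hirr _ ⟨ℓ, mem_orbit_self ℓ⟩ (fun g _ hx => mem_orbit_of_mem_orbit g hx) hclosed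

end JLNimRep

theorem stmt1_general (p : ℕ) (G : Type*) [Group G] [Fintype G]
    (L : Type*) [Fintype L] [MulAction G L]
    (M : JLNimRep p G L) (hirr : M.Irreducible)
    (horb : ∃ a b : L, b ∉ MulAction.orbit G a)
    (k : ℕ) (hk1 : 1 ≤ k) (hk2 : k ≤ p - 1) (hkp : Nat.gcd k p = 1)
    (ℓ ℓ' : L) (hsame : ℓ' ∈ MulAction.orbit G ℓ) :
    M.N k ℓ ℓ' = 0 := by
  obtain ⟨g, rfl⟩ := hsame
  rw [M.smul_right k hk1 hk2]
  refine Nat.eq_zero_of_not_pos fun hℓ => ?_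
  have hdiag : ∀ j, 1 ≤ j → j ≤ p - 1 → 0 < M.N j ℓ ℓ := fun j hj1 hj2 =>
    M.N_self_pos_of_N_self_pos hk1 hk2 hkp hℓ hj1 hj2
  have huniv := hirr.orbit_eq_univ fun m hm1 hm2 _ _ =>
    M.mem_orbit_of_N_self_pos hdiag hm1 hm2
  obtain ⟨a, b, hb⟩ := horb
  have ha : a ∈ orbit G ℓ := huniv ▸ Set.mem_univ a
  exact hb (orbit_eq_iff.mpr ha ▸ huniv ▸ Set.mem_univ b)

/-- in an irreducible NIM-rep of `R_{p,G}` with at least two `G`-orbits,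
`X_k` with `gcd(k,p) = 1` cannot fix any orbit. -/
theorem stmt1 (p : ℕ) (hp : 2 ≤ p) (G : Type*) [Group G] [Fintype G]
    (hG : IsSquare (Fintype.card G))
    (L : Type*) [Fintype L] [Nonempty L] [MulAction G L]
    (M : JLNimRep p G L) (hirr : M.Irreducible)
    (horb : ∃ a b : L, b ∉ MulAction.orbit G a)
    (k : ℕ) (hk1 : 1 ≤ k) (hk2 : k ≤ p - 1) (hkp : Nat.gcd k p = 1)
    (ℓ ℓ' : L) (hsame : ℓ' ∈ MulAction.orbit G ℓ) :
    M.N k ℓ ℓ' = 0 :=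
  stmt1_general p G L M hirr horb k hk1 hk2 hkp ℓ ℓ' hsame
end

section
/- Let (L, •, N) be an irreducible NIM-rep of the Jordan–Larson fusion ring R_{p,G}, and let m be the number of orbits of the G-action on L. Then m divides p. -/
open scoped BigOperators

/-- the number of `G`-orbits of an irreducible NIM-rep of `R_{p,G}`
divides `p`. -/
theorem stmt2 (p : ℕ) (hp : 2 ≤ p) (G : Type*) [Group G] [Fintype G]
    (hG : IsSquare (Fintype.card G))
    (L : Type*) [Fintype L] [Nonempty L] [MulAction G L]
    (M : JLNimRep p G L) (hirr : M.Irreducible) :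
    Nat.card (MulAction.orbitRel.Quotient G L) ∣ p := by
  classical
  set Q := MulAction.orbitRel.Quotient G L with hQ
  have h1p : (1 : ℕ) ≤ p - 1 := by omega
  -- existence of a target with positive multiplicity
  have hex : ∀ (k : ℕ), 1 ≤ k → k ≤ p - 1 → ∀ ℓ : L, ∃ t, 0 < M.N k ℓ t := by
    intro k hk1 hk2 ℓ
    have hd := M.fusion_dual k hk1 hk2 ℓ ℓ
    have hpos : 0 < Nat.card {g : G // g • ℓ = ℓ} := by
      have : Nonempty {g : G // g • ℓ = ℓ} := ⟨⟨1, one_smul G ℓ⟩⟩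
      exact Nat.card_pos
    rw [← hd] at hpos
    obtain ⟨t, _, ht⟩ := Finset.exists_ne_zero_of_sum_ne_zero hpos.ne'
    exact ⟨t, Nat.pos_of_ne_zero fun h => ht (by rw [h, zero_mul])⟩
  -- functionality on orbits
  have horb : ∀ (k : ℕ), 1 ≤ k → k ≤ p - 1 → ∀ (ℓ t t' : L),
      0 < M.N k ℓ t → 0 < M.N k ℓ t' →
      (Quotient.mk'' t : Q) = Quotient.mk'' t' := by
    intro k hk1 hk2 ℓ t t' ht ht'
    have hdual : 0 < M.N (p - k) t ℓ := by
      rw [← M.dual_symm k hk1 hk2 ℓ t]; exact ht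
    have hd := M.fusion_dual (p - k) (by omega) (by omega) t t'
    have hpk : p - (p - k) = k := by omega
    rw [hpk] at hd
    have hsum : 0 < ∑ s : L, M.N (p - k) t s * M.N k s t' := by
      refine Finset.sum_pos' (fun s _ => Nat.zero_le _) ⟨ℓ, Finset.mem_univ _, ?_⟩
      positivity
    rw [hd] at hsum
    have : Nonempty {g : G // g • t = t'} := (Nat.card_pos_iff.mp hsum).1
    obtain ⟨g, hg⟩ := this
    exact ((Quotient.eq'').mpr ((MulAction.orbitRel_apply).mpr
      (MulAction.mem_orbit_iff.mpr ⟨g, hg⟩))).symm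
  -- the step function on L
  choose f hf using hex 1 le_rfl h1p
  -- descends to the quotient
  have hcompat : ∀ ℓ ℓ' : L, MulAction.orbitRel G L ℓ ℓ' →
      MulAction.orbitRel G L (f ℓ) (f ℓ') := by
    intro ℓ ℓ' hr
    rw [MulAction.orbitRel_apply] at hr
    obtain ⟨g, hg⟩ := MulAction.mem_orbit_iff.mp hr
    have h1 : 0 < M.N 1 ℓ' (f ℓ) := by
      rw [← M.smul_left 1 le_rfl h1p g ℓ' (f ℓ), hg]
      exact hf ℓ
    exact Quotient.eq''.mp (horb 1 le_rfl h1p ℓ' (f ℓ) (f ℓ') h1 (hf ℓ'))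
  let F : Q → Q := Quotient.map' f hcompat
  have hFmk : ∀ ℓ : L, F (Quotient.mk'' ℓ) = Quotient.mk'' (f ℓ) := fun ℓ => rfl
  -- F applied to mk ℓ equals mk t whenever N 1 ℓ t > 0
  have hF1 : ∀ (ℓ t : L), 0 < M.N 1 ℓ t → F (Quotient.mk'' ℓ) = Quotient.mk'' t := by
    intro ℓ t ht
    rw [hFmk]
    exact horb 1 le_rfl h1p ℓ (f ℓ) t (hf ℓ) ht
  -- iterates realize all N k
  have hFk : ∀ (k : ℕ), 1 ≤ k → k ≤ p - 1 → ∀ (ℓ ℓ' : L), 0 < M.N k ℓ ℓ' →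
      F^[k] (Quotient.mk'' ℓ) = Quotient.mk'' ℓ' := by
    intro k hk1
    induction k, hk1 using Nat.le_induction with
    | base =>
      intro _ ℓ ℓ' h
      simpa using hF1 ℓ ℓ' h
    | succ k hk ih =>
      intro hk2 ℓ ℓ' h
      have hkp : k ≤ p - 1 := by omega
      have hmod : (k + 1) % p = k + 1 := Nat.mod_eq_of_lt (by omega)
      have hfus := M.fusion k 1 hk hkp le_rfl h1p (by omega) ℓ ℓ'
      rw [hmod] at hfus
      have hsqrt : 0 < Nat.sqrt (Fintype.card G) := by
        have : 0 < Fintype.card G := Fintype.card_pos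
        exact Nat.sqrt_pos.mpr this
      have hpos : 0 < ∑ t : L, M.N 1 ℓ t * M.N k t ℓ' := by
        rw [hfus]; positivity
      obtain ⟨t, _, ht⟩ := Finset.exists_ne_zero_of_sum_ne_zero hpos.ne'
      have ht1 : 0 < M.N 1 ℓ t := Nat.pos_of_ne_zero fun h => ht (by rw [h, zero_mul])
      have htk : 0 < M.N k t ℓ' := Nat.pos_of_ne_zero fun h => ht (by rw [h, mul_zero])
      rw [Function.iterate_succ_apply, hF1 ℓ t ht1]
      exact ih hkp t ℓ' htk
  -- F^[p] = id
  have hFp : ∀ q : Q, F^[p] q = q := by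
    intro q
    induction q using Quotient.inductionOn' with
    | h ℓ =>
      have hp1 : p = (p - 1) + 1 := by omega
      have hdual : 0 < M.N (p - 1) (f ℓ) ℓ := by
        rw [← M.dual_symm 1 le_rfl h1p ℓ (f ℓ)]; exact hf ℓ
      calc F^[p] (Quotient.mk'' ℓ) = F^[(p-1)+1] (Quotient.mk'' ℓ) := by rw [← hp1]
        _ = F^[p-1] (F (Quotient.mk'' ℓ)) := Function.iterate_succ_apply F (p-1) _
        _ = F^[p-1] (Quotient.mk'' (f ℓ)) := by rw [hFmk]
        _ = Quotient.mk'' ℓ := hFk (p-1) h1p le_rfl (f ℓ) ℓ hdual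
  -- transitivity from irreducibility
  obtain ⟨ℓ₀⟩ := ‹Nonempty L›
  have htrans : ∀ q : Q, ∃ n : ℕ, F^[n] (Quotient.mk'' ℓ₀) = q := by
    set S : Set L := {ℓ | ∃ n : ℕ, F^[n] (Quotient.mk'' ℓ₀) = Quotient.mk'' ℓ} with hS
    have hSuniv : S = Set.univ := by
      apply hirr S ⟨ℓ₀, 0, rfl⟩
      · intro g ℓ hℓ
        obtain ⟨n, hn⟩ := hℓ
        exact ⟨n, hn.trans
          (Quotient.sound' ((MulAction.orbitRel_apply).mpr (MulAction.mem_orbit ℓ g))).symm⟩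
      · intro k hk1 hk2 ℓ ℓ' hℓ hN
        obtain ⟨n, hn⟩ := hℓ
        refine ⟨k + n, ?_⟩
        rw [Function.iterate_add_apply, hn]
        exact hFk k hk1 hk2 ℓ ℓ' hN
    intro q
    induction q using Quotient.inductionOn' with
    | h ℓ =>
      have : ℓ ∈ S := by rw [hSuniv]; trivial
      exact this
  -- build the permutation
  have hleft : Function.LeftInverse (F^[p-1]) F := by
    intro x
    have := hFp x
    rwa [show p = (p-1)+1 by omega, Function.iterate_succ_apply] at this
  have hright : Function.RightInverse (F^[p-1]) F := by
    intro x
    have := hFp x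
    rwa [show p = (p-1)+1 by omega, Function.iterate_succ_apply'] at this
  let σ : Equiv.Perm Q := ⟨F, F^[p-1], hleft, hright⟩
  have hσ : ∀ (n : ℕ) (x : Q), (σ ^ n) x = F^[n] x := by
    intro n
    induction n with
    | zero => intro x; rfl
    | succ n ih =>
      intro x
      rw [pow_succ, Equiv.Perm.mul_apply, Function.iterate_succ_apply]
      exact ih (σ x)
  have hσp : σ ^ p = 1 := by
    ext x
    rw [hσ p x, hFp x]
    rfl
  -- the subgroup generated by σ acts transitively on Q
  set H := Subgroup.zpowers σ with hH
  set q₀ : Q := Quotient.mk'' ℓ₀ with hq₀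
  have horbuniv : MulAction.orbit H q₀ = Set.univ := by
    ext q
    simp only [Set.mem_univ, iff_true]
    obtain ⟨n, hn⟩ := htrans q
    refine MulAction.mem_orbit_iff.mpr ⟨⟨σ ^ n, Subgroup.npow_mem_zpowers σ n⟩, ?_⟩
    show (σ ^ n) • q₀ = q
    rw [Equiv.Perm.smul_def, hσ n q₀]
    exact hn
  have hcard1 : Nat.card Q = Nat.card (MulAction.orbit H q₀) := by
    rw [horbuniv]
    exact (Nat.card_congr (Equiv.Set.univ Q)).symm
  have hcard2 : Nat.card (MulAction.orbit H q₀) = Nat.card (H ⧸ MulAction.stabilizer H q₀) :=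
    Nat.card_congr (MulAction.orbitEquivQuotientStabilizer H q₀)
  have hdvd1 : Nat.card (H ⧸ MulAction.stabilizer H q₀) ∣ Nat.card H :=
    Subgroup.card_quotient_dvd_card _
  have hcardH : Nat.card H = orderOf σ := Nat.card_zpowers σ
  have hord : orderOf σ ∣ p := orderOf_dvd_of_pow_eq_one hσp
  calc Nat.card Q ∣ Nat.card H := by rw [hcard1, hcard2]; exact hdvd1
    _ = orderOf σ := hcardH
    _ ∣ p := hord
end

section
/- Let (L, •, N) be an irreducible NIM-rep of the Jordan–Larson fusion ring R_{p,G}. If k ∈ {1,…,p−1} and ℓ, ℓ' ∈ L satisfy N_k(ℓ, ℓ') > 0, then N_k(ℓ, ℓ')² · |G| = |Stab_G(ℓ)| · |Stab_G(ℓ')|, where Stab_G(ℓ) = {g ∈ G : g•ℓ = ℓ}. In particular |G| divides |Stab_G(ℓ)|·|Stab_G(ℓ')| and the quotient is a perfect square. -/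
open scoped BigOperators

/-- if `N_k(ℓ,ℓ') > 0` in an irreducible NIM-rep of `R_{p,G}`, then
`N_k(ℓ,ℓ')² · |G| = |Stab_G(ℓ)| · |Stab_G(ℓ')|`; in particular `|G|` divides the
product of the stabilizer orders and the quotient is a perfect square. -/
theorem stmt3 (p : ℕ) (hp : 2 ≤ p) (G : Type*) [Group G] [Fintype G]
    (hG : IsSquare (Fintype.card G))
    (L : Type*) [Fintype L] [Nonempty L] [MulAction G L]
    (M : JLNimRep p G L) (hirr : M.Irreducible)
    (k : ℕ) (hk1 : 1 ≤ k) (hk2 : k ≤ p - 1) (ℓ ℓ' : L) (h : 0 < M.N k ℓ ℓ') :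
    (M.N k ℓ ℓ') ^ 2 * Fintype.card G =
      Nat.card (MulAction.stabilizer G ℓ) * Nat.card (MulAction.stabilizer G ℓ') ∧
    Fintype.card G ∣
      Nat.card (MulAction.stabilizer G ℓ) * Nat.card (MulAction.stabilizer G ℓ') ∧
    IsSquare (Nat.card (MulAction.stabilizer G ℓ) * Nat.card (MulAction.stabilizer G ℓ')
      / Fintype.card G) := by
  classical
  set n := M.N k ℓ ℓ' with hn
  have hkp : k ≤ p := le_trans hk2 (Nat.sub_le p 1)
  have hpk1 : 1 ≤ p - k := by omega
  have hpk2 : p - k ≤ p - 1 := by omega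
  have hppk : p - (p - k) = k := Nat.sub_sub_self hkp
  -- zero cardinality for non-orbit elements
  have hzero : ∀ (x y : L), y ∉ MulAction.orbit G x → Nat.card {g : G // g • x = y} = 0 := by
    intro x y hy
    have : IsEmpty {g : G // g • x = y} := by
      constructor; rintro ⟨g, hg⟩
      exact hy (MulAction.mem_orbit_iff.mpr ⟨g, hg⟩)
    exact Nat.card_of_isEmpty
  -- Step A : t ∉ orbit ℓ → N k t ℓ' = 0
  have hA : ∀ t : L, t ∉ MulAction.orbit G ℓ → M.N k t ℓ' = 0 := by
    intro t ht
    have hfd := M.fusion_dual k hk1 hk2 ℓ t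
    rw [hzero ℓ t ht] at hfd
    have hterm : M.N k ℓ ℓ' * M.N (p - k) ℓ' t = 0 :=
      Finset.sum_eq_zero_iff.mp hfd ℓ' (Finset.mem_univ ℓ')
    rw [← M.dual_symm k hk1 hk2 t ℓ'] at hterm
    rcases Nat.mul_eq_zero.mp hterm with h0 | h0
    · omega
    · exact h0
  -- Step A' : t ∉ orbit ℓ' → N k ℓ t = 0
  have hA' : ∀ t : L, t ∉ MulAction.orbit G ℓ' → M.N k ℓ t = 0 := by
    intro t ht
    have hfd := M.fusion_dual (p - k) hpk1 hpk2 ℓ' t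
    rw [hzero ℓ' t ht, hppk] at hfd
    have hterm : M.N (p - k) ℓ' ℓ * M.N k ℓ t = 0 :=
      Finset.sum_eq_zero_iff.mp hfd ℓ (Finset.mem_univ ℓ)
    rw [← M.dual_symm k hk1 hk2 ℓ ℓ'] at hterm
    rcases Nat.mul_eq_zero.mp hterm with h0 | h0
    · omega
    · exact h0
  -- Stabilizer cards as sums
  have hstab : ∀ x : L, Nat.card {g : G // g • x = x} = Nat.card (MulAction.stabilizer G x) := by
    intro x
    exact Nat.card_congr (Equiv.subtypeEquivRight (fun g => by
      simp [MulAction.mem_stabilizer_iff])).symm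
  -- Step B : card stab ℓ' = card (orbit ℓ) * n^2
  have hB : Nat.card (MulAction.stabilizer G ℓ') =
      Nat.card (MulAction.orbit G ℓ) * n ^ 2 := by
    have hfd := M.fusion_dual (p - k) hpk1 hpk2 ℓ' ℓ'
    rw [hppk, hstab ℓ'] at hfd
    have hsum : ∀ s : L, M.N (p - k) ℓ' s * M.N k s ℓ' = M.N k s ℓ' * M.N k s ℓ' := by
      intro s; rw [← M.dual_symm k hk1 hk2 s ℓ']
    rw [Finset.sum_congr rfl (fun s _ => hsum s)] at hfd
    have hsplit : ∑ s : L, M.N k s ℓ' * M.N k s ℓ' =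
        ∑ s ∈ (MulAction.orbit G ℓ).toFinset, M.N k s ℓ' * M.N k s ℓ' := by
      symm
      apply Finset.sum_subset (Finset.subset_univ _)
      intro s _ hs
      rw [hA s (by simpa using hs)]; ring
    have hconst : ∀ s ∈ (MulAction.orbit G ℓ).toFinset, M.N k s ℓ' * M.N k s ℓ' = n ^ 2 := by
      intro s hs
      rw [Set.mem_toFinset] at hs
      obtain ⟨g, hg⟩ := MulAction.mem_orbit_iff.mp hs
      subst hg
      rw [M.smul_left k hk1 hk2 g ℓ ℓ']; ring
    rw [hsplit, Finset.sum_congr rfl hconst, Finset.sum_const, smul_eq_mul] at hfd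
    rw [← hfd, Set.toFinset_card, Nat.card_eq_fintype_card]
  -- Step C : card stab ℓ = card (orbit ℓ') * n^2
  have hC : Nat.card (MulAction.stabilizer G ℓ) =
      Nat.card (MulAction.orbit G ℓ') * n ^ 2 := by
    have hfd := M.fusion_dual k hk1 hk2 ℓ ℓ
    rw [hstab ℓ] at hfd
    have hsum : ∀ s : L, M.N k ℓ s * M.N (p - k) s ℓ = M.N k ℓ s * M.N k ℓ s := by
      intro s; rw [← M.dual_symm k hk1 hk2 ℓ s]
    rw [Finset.sum_congr rfl (fun s _ => hsum s)] at hfd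
    have hsplit : ∑ s : L, M.N k ℓ s * M.N k ℓ s =
        ∑ s ∈ (MulAction.orbit G ℓ').toFinset, M.N k ℓ s * M.N k ℓ s := by
      symm
      apply Finset.sum_subset (Finset.subset_univ _)
      intro s _ hs
      rw [hA' s (by simpa using hs)]; ring
    have hconst : ∀ s ∈ (MulAction.orbit G ℓ').toFinset, M.N k ℓ s * M.N k ℓ s = n ^ 2 := by
      intro s hs
      rw [Set.mem_toFinset] at hs
      obtain ⟨g, hg⟩ := MulAction.mem_orbit_iff.mp hs
      subst hg
      rw [M.smul_right k hk1 hk2 g ℓ ℓ']; ring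
    rw [hsplit, Finset.sum_congr rfl hconst, Finset.sum_const, smul_eq_mul] at hfd
    rw [← hfd, Set.toFinset_card, Nat.card_eq_fintype_card]
  -- orbit-stabilizer
  have hos : ∀ x : L, Nat.card (MulAction.orbit G x) * Nat.card (MulAction.stabilizer G x) =
      Fintype.card G := by
    intro x
    rw [Nat.card_eq_fintype_card, Nat.card_eq_fintype_card]
    exact MulAction.card_orbit_mul_card_stabilizer_eq_card_group G x
  set Sℓ := Nat.card (MulAction.stabilizer G ℓ)
  set Sℓ' := Nat.card (MulAction.stabilizer G ℓ')
  set Oℓ := Nat.card (MulAction.orbit G ℓ)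
  set Oℓ' := Nat.card (MulAction.orbit G ℓ')
  have key : n ^ 2 * Fintype.card G = Sℓ * Sℓ' := by
    have hsq : (Sℓ * Sℓ') ^ 2 = (n ^ 2 * Fintype.card G) ^ 2 := by
      calc (Sℓ * Sℓ') ^ 2 = (Oℓ' * n ^ 2) * (Oℓ * n ^ 2) * (Sℓ * Sℓ') := by
            rw [← hB, ← hC]; ring
        _ = n ^ 2 * n ^ 2 * ((Oℓ * Sℓ) * (Oℓ' * Sℓ')) := by ring
        _ = (n ^ 2 * Fintype.card G) ^ 2 := by rw [hos ℓ, hos ℓ']; ring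
    exact (Nat.pow_left_injective (by norm_num) hsq).symm
  refine ⟨key, ⟨n ^ 2, by rw [← key]; ring⟩, ?_⟩
  have hGpos : 0 < Fintype.card G := Fintype.card_pos
  have : Sℓ * Sℓ' / Fintype.card G = n ^ 2 := by
    rw [← key, mul_comm, Nat.mul_div_cancel_left _ hGpos]
  rw [this]
  exact ⟨n, sq n⟩
end

section
/- Let m be a positive divisor of p and let H_1, …, H_m ≤ G be subgroups such that for all 1 ≤ i ≤ m and 1 ≤ k ≤ p−1, |G| divides |H_i| · |H_{σ_k(i)}| and the quotient |H_i|·|H_{σ_k(i)}|/|G| is a perfect square, where σ_k(i) ∈ {1,…,m} is the residue of i + k modulo m. Then there exists an irreducible NIM-rep of R_{p,G} on the set L = ⊔_{i=1}^m G/H_i with the natural left G-action, in which for x ∈ G/H_i and y ∈ G/H_j one has N_k(x, y) = √(|H_i|·|H_j|/|G|) if j = σ_k(i), and N_k(x, y) = 0 otherwise. -/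
open scoped BigOperators

/-- The natural `G`-action on the disjoint union `⊔ᵢ G/Hᵢ`. -/
instance sigmaQuotMulAction (G : Type*) [Group G] {m : ℕ} (H : Fin m → Subgroup G) :
    MulAction G ((i : Fin m) × (G ⧸ H i)) where
  smul g x := ⟨x.1, g • x.2⟩
  one_smul := by
    rintro ⟨i, y⟩
    show (⟨i, (1 : G) • y⟩ : (i : Fin m) × (G ⧸ H i)) = ⟨i, y⟩
    rw [one_smul]
  mul_smul g h := by
    rintro ⟨i, y⟩
    show (⟨i, (g * h) • y⟩ : (i : Fin m) × (G ⧸ H i)) = ⟨i, g • h • y⟩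
    rw [mul_smul]


noncomputable instance sigmaQuotFintype (G : Type*) [Group G] [Fintype G] {m : ℕ}
    (H : Fin m → Subgroup G) : Fintype ((i : Fin m) × (G ⧸ H i)) :=
  Fintype.ofFinite _

/-! The multiplicity `N_k(x, y)` only depends on the blocks `G/H_a ∋ x` and `G/H_b ∋ y`, so
`∑_t N_j(x, t) N_i(t, y)` collapses to the single block `b = σ_j(a)`, counted `[G : H_b]` times.
Writing `c(K, L) = √(|K| |L| / |G|)`, the fusion rules then reduce to
`[G : L] c(K, L) c(L, M) = √|G| c(K, M)` and `[G : L] c(K, L) c(L, K) = |K|`, both consequences of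
`[G : L] |L| = |G|`; on the right of the second one, `|K|` counts the `g` moving one point of
`G/K` to another. Because `m ∣ p`, the shifts satisfy `σ_{p-k} ∘ σ_k = id` and
`σ_{(i+j) mod p} = σ_i ∘ σ_j`. For irreducibility, `G` is transitive on each `G/H_a`, and `N_1`
links every block to the next one with a positive multiplicity. -/

namespace Subgroup

variable {G : Type*} [Group G]

theorem card_smul_eq_card (H : Subgroup G) (q q' : G ⧸ H) :
    Nat.card {g : G // g • q = q'} = Nat.card H := by
  obtain ⟨a, rfl⟩ := QuotientGroup.mk_surjective q
  obtain ⟨b, rfl⟩ := QuotientGroup.mk_surjective q'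
  refine Nat.card_congr
    { toFun g := ⟨((g : G) * a)⁻¹ * b, QuotientGroup.eq.mp g.2⟩
      invFun h := ⟨b * (h : G)⁻¹ * a⁻¹, ?_⟩
      left_inv g := by ext; simp
      right_inv h := by ext; simp }
  change ((b * (h : G)⁻¹ * a⁻¹ * a : G) : G ⧸ H) = b
  simp

variable [Fintype G] (K L M : Subgroup G)

def SquareCompatible : Prop :=
  Fintype.card G ∣ Nat.card K * Nat.card L ∧ IsSquare (Nat.card K * Nat.card L / Fintype.card G)

noncomputable def sqrtMult : ℕ :=
  Nat.sqrt (Nat.card K * Nat.card L / Fintype.card G)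

theorem sqrtMult_comm : K.sqrtMult L = L.sqrtMult K := by
  rw [sqrtMult, sqrtMult, Nat.mul_comm]

theorem index_mul_card_eq_card : K.index * Nat.card K = Fintype.card G := by
  rw [index_mul_card, Nat.card_eq_fintype_card]

variable {K L M}

theorem SquareCompatible.sqrtMult_mul_self_mul_card (h : K.SquareCompatible L) :
    K.sqrtMult L * K.sqrtMult L * Fintype.card G = Nat.card K * Nat.card L := by
  obtain ⟨hdvd, d, hd⟩ := h
  rw [sqrtMult, hd, Nat.sqrt_eq, ← hd, Nat.div_mul_cancel hdvd]

theorem SquareCompatible.sqrtMult_pos (h : K.SquareCompatible L) : 0 < K.sqrtMult L := by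
  refine Nat.pos_of_ne_zero fun h0 => ?_
  have := h.sqrtMult_mul_self_mul_card
  rw [h0, zero_mul, zero_mul] at this
  exact (Nat.mul_ne_zero Nat.card_pos.ne' Nat.card_pos.ne') this.symm

theorem index_mul_sqrtMult_mul_sqrtMult (hG : IsSquare (Fintype.card G))
    (hKL : K.SquareCompatible L) (hLM : L.SquareCompatible M) (hKM : K.SquareCompatible M) :
    L.index * K.sqrtMult L * L.sqrtMult M = Nat.sqrt (Fintype.card G) * K.sqrtMult M := by
  -- Both sides are `√(|K| |M|)`; compare squares to get rid of `Nat.sqrt`.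
  obtain ⟨n, hn⟩ := hG
  rw [hn, Nat.sqrt_eq]
  have hGG : 0 < Fintype.card G * Fintype.card G := by positivity
  refine Nat.mul_self_inj.mp (Nat.eq_of_mul_eq_mul_right hGG ?_)
  calc L.index * K.sqrtMult L * L.sqrtMult M * (L.index * K.sqrtMult L * L.sqrtMult M) *
        (Fintype.card G * Fintype.card G)
      = L.index * L.index * (K.sqrtMult L * K.sqrtMult L * Fintype.card G) *
          (L.sqrtMult M * L.sqrtMult M * Fintype.card G) := by ring
    _ = (L.index * Nat.card L) * (L.index * Nat.card L) * (Nat.card K * Nat.card M) := by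
      rw [hKL.sqrtMult_mul_self_mul_card, hLM.sqrtMult_mul_self_mul_card]; ring
    _ = (n * n) * (K.sqrtMult M * K.sqrtMult M * Fintype.card G) * Fintype.card G := by
      rw [index_mul_card_eq_card, hKM.sqrtMult_mul_self_mul_card, ← hn]; ring
    _ = n * K.sqrtMult M * (n * K.sqrtMult M) * (Fintype.card G * Fintype.card G) := by ring

theorem index_mul_sqrtMult_mul_sqrtMult_self (hKL : K.SquareCompatible L) :
    L.index * K.sqrtMult L * L.sqrtMult K = Nat.card K := by
  rw [sqrtMult_comm L K]
  refine Nat.eq_of_mul_eq_mul_right (Fintype.card_pos (α := G)) ?_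
  calc L.index * K.sqrtMult L * K.sqrtMult L * Fintype.card G
      = L.index * (K.sqrtMult L * K.sqrtMult L * Fintype.card G) := by ring
    _ = (L.index * Nat.card L) * Nat.card K := by
      rw [hKL.sqrtMult_mul_self_mul_card]; ring
    _ = Nat.card K * Fintype.card G := by rw [index_mul_card_eq_card]; ring

end Subgroup

section CyclicShift

variable {m : ℕ}

def cyclicShift (k : ℕ) (a : Fin m) : Fin m :=
  ⟨(a + k) % m, Nat.mod_lt _ a.pos⟩

theorem cyclicShift_cyclicShift (i j : ℕ) (a : Fin m) :
    cyclicShift i (cyclicShift j a) = cyclicShift (i + j) a := by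
  ext
  simp only [cyclicShift, Nat.mod_add_mod]
  congr 1
  ring

theorem cyclicShift_of_dvd {k : ℕ} (h : m ∣ k) (a : Fin m) : cyclicShift k a = a := by
  ext
  simp [cyclicShift, Nat.add_mod, Nat.mod_eq_zero_of_dvd h, Nat.mod_eq_of_lt a.2]

theorem cyclicShift_mod_of_dvd {p : ℕ} (hmp : m ∣ p) (k : ℕ) (a : Fin m) :
    cyclicShift (k % p) a = cyclicShift k a := by
  ext
  simp only [cyclicShift, Nat.add_mod (a : ℕ), Nat.mod_mod_of_dvd _ hmp]

theorem cyclicShift_sub_cyclicShift {p k : ℕ} (hmp : m ∣ p) (hk : k ≤ p) (a : Fin m) :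
    cyclicShift (p - k) (cyclicShift k a) = a := by
  rw [cyclicShift_cyclicShift, Nat.sub_add_cancel hk, cyclicShift_of_dvd hmp]

theorem eq_cyclicShift_iff {p k : ℕ} (hmp : m ∣ p) (hk : k ≤ p) (a b : Fin m) :
    b = cyclicShift k a ↔ a = cyclicShift (p - k) b := by
  constructor
  · rintro rfl
    exact (cyclicShift_sub_cyclicShift hmp hk a).symm
  · rintro rfl
    simpa [Nat.sub_sub_self hk] using
      (cyclicShift_sub_cyclicShift hmp (Nat.sub_le p k) b).symm

theorem exists_cyclicShift_eq (a b : Fin m) : ∃ d, cyclicShift d a = b := by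
  refine ⟨m + b - a, Fin.ext ?_⟩
  simp only [cyclicShift]
  rw [show (a : ℕ) + (m + b - a) = b + m by omega, Nat.add_mod_right, Nat.mod_eq_of_lt b.2]

end CyclicShift

theorem Fintype.sum_sigma_fst {ι M : Type*} [Fintype ι] {β : ι → Type*} [∀ i, Finite (β i)]
    [AddCommMonoid M] [inst : Fintype (Σ i, β i)] (F : ι → M) :
    ∑ x : Σ i, β i, F x.1 = ∑ i, Nat.card (β i) • F i := by
  have := fun i => Fintype.ofFinite (β i)
  rw [Subsingleton.elim inst Sigma.instFintype, Fintype.sum_sigma]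
  simp [Nat.card_eq_fintype_card]

section SigmaQuotient

variable {G : Type*} [Group G] {m : ℕ} {H : Fin m → Subgroup G}

theorem card_smul_sigma_eq (x y : (i : Fin m) × (G ⧸ H i)) :
    Nat.card {g : G // g • x = y} = if x.1 = y.1 then Nat.card (H x.1) else 0 := by
  obtain ⟨i, q⟩ := x
  obtain ⟨j, q'⟩ := y
  by_cases hij : i = j
  · subst hij
    rw [if_pos rfl, ← Subgroup.card_smul_eq_card (H i) q q']
    exact Nat.card_congr (Equiv.subtypeEquivRight fun g => sigma_mk_injective.eq_iff)
  · have : IsEmpty {g : G // g • (⟨i, q⟩ : (i : Fin m) × (G ⧸ H i)) = ⟨j, q'⟩} :=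
      ⟨fun g => hij (congrArg Sigma.fst g.2)⟩
    rw [if_neg hij, Nat.card_of_isEmpty]

theorem JLNimRep.irreducible_of_pos_of_eq_cyclicShift_one {p : ℕ} [Fintype G] (hp : 2 ≤ p)
    (M : JLNimRep p G ((i : Fin m) × (G ⧸ H i)))
    (hM : ∀ x y : (i : Fin m) × (G ⧸ H i), y.1 = cyclicShift 1 x.1 → 0 < M.N 1 x y) :
    M.Irreducible := by
  rintro S ⟨x₀, hx₀⟩ hSG hSN
  have fiber : ∀ x y : (i : Fin m) × (G ⧸ H i), x.1 = y.1 → x ∈ S → y ∈ S := by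
    rintro ⟨i, q⟩ ⟨j, q'⟩ (rfl : i = j) hq
    obtain ⟨g, rfl⟩ := MulAction.exists_smul_eq G q q'
    exact hSG g _ hq
  have reach : ∀ d, ∀ x : (i : Fin m) × (G ⧸ H i), x.1 = cyclicShift d x₀.1 → x ∈ S := by
    intro d
    induction d with
    | zero =>
      exact fun x hx => fiber x₀ x (hx.trans (cyclicShift_of_dvd (dvd_zero m) _)).symm hx₀
    | succ d ih =>
      intro x hx
      let y : (i : Fin m) × (G ⧸ H i) := ⟨cyclicShift d x₀.1, (1 : G)⟩
      refine hSN 1 le_rfl (by omega) y x (ih y rfl) (hM y x ?_)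
      rw [hx, cyclicShift_cyclicShift, add_comm]
  ext x
  obtain ⟨d, hd⟩ := exists_cyclicShift_eq x₀.1 x.1
  simpa using reach d x hd.symm

end SigmaQuotient

section CyclicMult

variable {G : Type*} [Group G] [Fintype G] {m p : ℕ} (H : Fin m → Subgroup G)

noncomputable def cyclicMult (k : ℕ) (a b : Fin m) : ℕ :=
  if b = cyclicShift k a then (H a).sqrtMult (H b) else 0

theorem cyclicMult_dual (hmp : m ∣ p) {k : ℕ} (hk : k ≤ p) (a b : Fin m) :
    cyclicMult H k a b = cyclicMult H (p - k) b a :=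
  if_congr (eq_cyclicShift_iff hmp hk a b) (Subgroup.sqrtMult_comm _ _) rfl

theorem sum_index_mul_cyclicMult (k : ℕ) (a : Fin m) (F : Fin m → ℕ) :
    ∑ l, (H l).index * (cyclicMult H k a l * F l) =
      (H (cyclicShift k a)).index *
        ((H a).sqrtMult (H (cyclicShift k a)) * F (cyclicShift k a)) := by
  simp [cyclicMult, ite_mul, mul_ite]

variable {H}

theorem sum_index_mul_cyclicMult_mul (hmp : m ∣ p) (hG : IsSquare (Fintype.card G))
    (hH : ∀ a k, 1 ≤ k → k ≤ p - 1 → (H a).SquareCompatible (H (cyclicShift k a)))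
    {i j : ℕ} (hi₁ : 1 ≤ i) (hi₂ : i ≤ p - 1) (hj₁ : 1 ≤ j) (hj₂ : j ≤ p - 1)
    (hij : (i + j) % p ≠ 0) (a b : Fin m) :
    ∑ l, (H l).index * (cyclicMult H j a l * cyclicMult H i l b) =
      Nat.sqrt (Fintype.card G) * cyclicMult H ((i + j) % p) a b := by
  rw [sum_index_mul_cyclicMult, cyclicMult, cyclicMult, cyclicShift_mod_of_dvd hmp,
    cyclicShift_cyclicShift]
  split_ifs with hb
  · subst hb
    have hLM := hH (cyclicShift j a) i hi₁ hi₂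
    have hKM := hH a ((i + j) % p) (Nat.one_le_iff_ne_zero.mpr hij)
      (Nat.le_sub_one_of_lt (Nat.mod_lt _ (by omega)))
    rw [cyclicShift_cyclicShift] at hLM
    rw [cyclicShift_mod_of_dvd hmp] at hKM
    rw [← mul_assoc,
      Subgroup.index_mul_sqrtMult_mul_sqrtMult hG (hH a j hj₁ hj₂) hLM hKM]
  · rw [mul_zero, mul_zero, mul_zero]

theorem sum_index_mul_cyclicMult_mul_dual (hmp : m ∣ p)
    (hH : ∀ a k, 1 ≤ k → k ≤ p - 1 → (H a).SquareCompatible (H (cyclicShift k a)))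
    {i : ℕ} (hi₁ : 1 ≤ i) (hi₂ : i ≤ p - 1) (a b : Fin m) :
    ∑ l, (H l).index * (cyclicMult H i a l * cyclicMult H (p - i) l b) =
      if a = b then Nat.card (H a) else 0 := by
  rw [sum_index_mul_cyclicMult, cyclicMult, cyclicShift_sub_cyclicShift hmp (by omega)]
  by_cases hab : a = b
  · subst hab
    rw [if_pos rfl, if_pos rfl, ← mul_assoc,
      Subgroup.index_mul_sqrtMult_mul_sqrtMult_self (hH a i hi₁ hi₂)]
  · rw [if_neg (Ne.symm hab), if_neg hab, mul_zero, mul_zero]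

noncomputable def cyclicNimRep (hmp : m ∣ p) (hG : IsSquare (Fintype.card G))
    (hH : ∀ a k, 1 ≤ k → k ≤ p - 1 → (H a).SquareCompatible (H (cyclicShift k a))) :
    JLNimRep p G ((i : Fin m) × (G ⧸ H i)) where
  N k x y := cyclicMult H k x.1 y.1
  smul_left _ _ _ _ _ _ := rfl
  smul_right _ _ _ _ _ _ := rfl
  dual_symm _ _ hk _ _ := cyclicMult_dual H hmp (by omega) _ _
  fusion _ _ hi₁ hi₂ hj₁ hj₂ hij x y :=
    (Fintype.sum_sigma_fst _).trans
      (sum_index_mul_cyclicMult_mul hmp hG hH hi₁ hi₂ hj₁ hj₂ hij x.1 y.1)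
  fusion_dual _ hi₁ hi₂ x y :=
    ((Fintype.sum_sigma_fst _).trans
      (sum_index_mul_cyclicMult_mul_dual hmp hH hi₁ hi₂ x.1 y.1)).trans
        (card_smul_sigma_eq x y).symm

end CyclicMult

/-- given a positive divisor `m` of `p` and subgroups `H₁,…,Hₘ ≤ G`
satisfying the square condition, there is an irreducible NIM-rep of `R_{p,G}` on
`⊔ᵢ G/Hᵢ` with the stated multiplicities, where `σₖ(i) = (i + k) mod m`. -/
theorem stmt4 (p : ℕ) (hp : 2 ≤ p) (G : Type*) [Group G] [Fintype G]
    (hG : IsSquare (Fintype.card G))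
    (m : ℕ) (hm : 0 < m) (hmp : m ∣ p) (H : Fin m → Subgroup G)
    (hH : ∀ (i : Fin m) (k : ℕ), 1 ≤ k → k ≤ p - 1 →
      Fintype.card G ∣
        Nat.card (H i) * Nat.card (H ⟨((i : ℕ) + k) % m, Nat.mod_lt _ hm⟩) ∧
      IsSquare (Nat.card (H i) * Nat.card (H ⟨((i : ℕ) + k) % m, Nat.mod_lt _ hm⟩)
        / Fintype.card G)) :
    ∃ M : JLNimRep p G ((i : Fin m) × (G ⧸ H i)), M.Irreducible ∧
      ∀ (k : ℕ), 1 ≤ k → k ≤ p - 1 → ∀ (x y : (i : Fin m) × (G ⧸ H i)),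
        M.N k x y =
          if (y.1 : ℕ) = ((x.1 : ℕ) + k) % m
          then Nat.sqrt (Nat.card (H x.1) * Nat.card (H y.1) / Fintype.card G)
          else 0 := by
  have hcompat : ∀ a k, 1 ≤ k → k ≤ p - 1 → (H a).SquareCompatible (H (cyclicShift k a)) := hH
  refine ⟨cyclicNimRep hmp hG hcompat, ?_, fun k _ _ x y => ?_⟩
  · refine JLNimRep.irreducible_of_pos_of_eq_cyclicShift_one hp _ fun x y hxy => ?_
    change 0 < cyclicMult H 1 x.1 y.1
    rw [cyclicMult, if_pos hxy, hxy]
    exact (hcompat x.1 1 le_rfl (by omega)).sqrtMult_pos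
  · simp [cyclicNimRep, cyclicMult, Fin.ext_iff, cyclicShift, Subgroup.sqrtMult]
end

section
/- Every irreducible NIM-rep (L, •, N) of the Jordan–Larson fusion ring R_{p,G} is admissible: there exists ℓ₀ ∈ L such that for every ℓ ∈ L, either ℓ lies in the G-orbit of ℓ₀, or N_k(ℓ₀, ℓ) > 0 for some k ∈ {1,…,p−1}. -/
open scoped BigOperators

/-- every irreducible NIM-rep of `R_{p,G}` is admissible. -/
theorem stmt6 (p : ℕ) (hp : 2 ≤ p) (G : Type*) [Group G] [Fintype G]
    (hG : IsSquare (Fintype.card G))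
    (L : Type*) [Fintype L] [Nonempty L] [MulAction G L]
    (M : JLNimRep p G L) (hirr : M.Irreducible) :
    ∃ ℓ₀ : L, ∀ ℓ : L,
      ℓ ∈ MulAction.orbit G ℓ₀ ∨ ∃ k : ℕ, 1 ≤ k ∧ k ≤ p - 1 ∧ 0 < M.N k ℓ₀ ℓ := by

  obtain ⟨ℓ₀⟩ := ‹Nonempty L›
  refine ⟨ℓ₀, ?_⟩
  set S : Set L := MulAction.orbit G ℓ₀ ∪
    {ℓ | ∃ k : ℕ, 1 ≤ k ∧ k ≤ p - 1 ∧ 0 < M.N k ℓ₀ ℓ} with hS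
  have hpos : 0 < p := by omega
  have key : S = Set.univ := by
    apply hirr
    · exact ⟨ℓ₀, Or.inl (MulAction.mem_orbit_self ℓ₀)⟩
    · rintro g ℓ (⟨h, rfl⟩ | ⟨k, hk1, hk2, hk3⟩)
      · exact Or.inl ⟨g * h, (mul_smul g h ℓ₀)⟩
      · exact Or.inr ⟨k, hk1, hk2, by rwa [M.smul_right k hk1 hk2]⟩
    · rintro k hk1 hk2 ℓ ℓ' (⟨g, rfl⟩ | ⟨j, hj1, hj2, hj3⟩) hN
      · rw [M.smul_left k hk1 hk2] at hN
        exact Or.inr ⟨k, hk1, hk2, hN⟩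
      · -- ℓ ∈ support: use fusion
        by_cases hmod : (k + j) % p = 0
        · -- j + k = p, use fusion_dual
          have hjk : j + k = p := by
            have hdvd : p ∣ (k + j) := Nat.dvd_of_mod_eq_zero hmod
            have hle' : p ≤ k + j := Nat.le_of_dvd (by omega) hdvd
            have h0 : k + j - p = 0 :=
              Nat.eq_zero_of_dvd_of_lt (Nat.dvd_sub hdvd dvd_rfl) (by omega)
            omega
          have hd := M.fusion_dual j hj1 hj2 ℓ₀ ℓ'
          have hterm : 0 < M.N j ℓ₀ ℓ * M.N (p - j) ℓ ℓ' := by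
            have : p - j = k := by omega
            rw [this]; exact Nat.mul_pos hj3 hN
          have hle : M.N j ℓ₀ ℓ * M.N (p - j) ℓ ℓ' ≤
              ∑ t : L, M.N j ℓ₀ t * M.N (p - j) t ℓ' :=
            Finset.single_le_sum (f := fun t => M.N j ℓ₀ t * M.N (p - j) t ℓ')
              (fun t _ => Nat.zero_le _) (Finset.mem_univ ℓ)
          rw [hd] at hle
          have hcard : 0 < Nat.card {g : G // g • ℓ₀ = ℓ'} := lt_of_lt_of_le hterm hle
          have : Nonempty {g : G // g • ℓ₀ = ℓ'} := Nat.card_pos_iff.mp hcard |>.1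
          obtain ⟨⟨g, hg⟩⟩ := this
          exact Or.inl ⟨g, hg⟩
        · -- use fusion
          have hm1 : 1 ≤ (k + j) % p := Nat.one_le_iff_ne_zero.mpr hmod
          have hm2 : (k + j) % p ≤ p - 1 := by
            have := Nat.mod_lt (k + j) hpos
            omega
          have hf := M.fusion k j hk1 hk2 hj1 hj2 hmod ℓ₀ ℓ'
          have hterm : 0 < M.N j ℓ₀ ℓ * M.N k ℓ ℓ' := Nat.mul_pos hj3 hN
          have hle : M.N j ℓ₀ ℓ * M.N k ℓ ℓ' ≤
              ∑ t : L, M.N j ℓ₀ t * M.N k t ℓ' :=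
            Finset.single_le_sum (f := fun t => M.N j ℓ₀ t * M.N k t ℓ')
              (fun t _ => Nat.zero_le _) (Finset.mem_univ ℓ)
          rw [hf] at hle
          have : 0 < M.N ((k + j) % p) ℓ₀ ℓ' := by
            rcases Nat.eq_zero_or_pos (M.N ((k + j) % p) ℓ₀ ℓ') with h0 | h0
            · rw [h0, Nat.mul_zero] at hle; omega
            · exact h0
          exact Or.inr ⟨(k + j) % p, hm1, hm2, this⟩
  intro ℓ
  have : ℓ ∈ S := key ▸ Set.mem_univ ℓ
  exact this
end

section
/- Let (L, •, N) be an irreducible NIM-rep of the fusion ring GLM(Γ, δ). Then for every x ∈ Γ/2Γ and every ℓ ∈ L, the support of the action of X_x on ℓ is contained in a single 2Γ-orbit: if ℓ', ℓ'' ∈ L satisfy N_x(ℓ, ℓ') > 0 and N_x(ℓ, ℓ'') > 0, then ℓ' and ℓ'' lie in the same orbit of the restricted action of 2Γ on L. -/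
open scoped BigOperators

/-- The subgroup `2Γ = {g + g : g ∈ Γ}` of an additive abelian group `Γ`. -/
def twoG (Γ : Type*) [AddCommGroup Γ] : AddSubgroup Γ :=
  (zsmulAddGroupHom 2 : Γ →+ Γ).range

/-- A NIM-rep of the fusion ring `GLM(Γ, δ)`: a finite set `L` with a `Γ`-action
together with multiplicity functions `N x : L → L → ℕ` for `x ∈ Γ/2Γ`, satisfying
the axioms coming from the fusion rules. -/
structure GLMNimRep (Γ : Type*) [AddCommGroup Γ] [Fintype Γ] (δ : Γ ⧸ twoG Γ)
    (L : Type*) [Fintype L] [AddAction Γ L] where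
  N : (Γ ⧸ twoG Γ) → L → L → ℕ
  vadd_left : ∀ (g : Γ) (x : Γ ⧸ twoG Γ) (ℓ ℓ' : L),
    N x (g +ᵥ ℓ) ℓ' = N (x + QuotientAddGroup.mk g) ℓ ℓ'
  vadd_right : ∀ (g : Γ) (x : Γ ⧸ twoG Γ) (ℓ ℓ' : L),
    N x ℓ (g +ᵥ ℓ') = N (x + QuotientAddGroup.mk g) ℓ ℓ'
  dual_symm : ∀ (x : Γ ⧸ twoG Γ) (ℓ ℓ' : L), N x ℓ ℓ' = N (x + δ) ℓ' ℓ
  fusion : ∀ (x y : Γ ⧸ twoG Γ) (ℓ ℓ' : L),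
    ∑ t : L, N y ℓ t * N x t ℓ' =
      Nat.card {s : Γ //
        (QuotientAddGroup.mk s : Γ ⧸ twoG Γ) = δ + x + y ∧ s +ᵥ ℓ = ℓ'}

/-- Irreducibility of a NIM-rep of `GLM(Γ, δ)`: the only nonempty subset closed
under the `Γ`-action and under the supports of all `N x` is the whole set. -/
def GLMNimRep.Irreducible {Γ : Type*} [AddCommGroup Γ] [Fintype Γ] {δ : Γ ⧸ twoG Γ}
    {L : Type*} [Fintype L] [AddAction Γ L] (M : GLMNimRep Γ δ L) : Prop :=
  ∀ S : Set L, S.Nonempty →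
    (∀ (g : Γ) (ℓ : L), ℓ ∈ S → g +ᵥ ℓ ∈ S) →
    (∀ (x : Γ ⧸ twoG Γ) (ℓ ℓ' : L), ℓ ∈ S → 0 < M.N x ℓ ℓ' → ℓ' ∈ S) →
    S = Set.univ

/-- `ℓ` and `ℓ'` lie in the same `Γ`-orbit. -/
def sameGOrbit (Γ : Type*) [AddCommGroup Γ] {L : Type*} [AddAction Γ L]
    (ℓ ℓ' : L) : Prop :=
  ∃ g : Γ, g +ᵥ ℓ = ℓ'

/-- `ℓ` and `ℓ'` lie in the same `2Γ`-orbit (orbit of the restricted action). -/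
def sameTwoOrbit (Γ : Type*) [AddCommGroup Γ] {L : Type*} [AddAction Γ L]
    (ℓ ℓ' : L) : Prop :=
  ∃ g ∈ twoG Γ, g +ᵥ ℓ = ℓ'

lemma twoTorsion {Γ : Type*} [AddCommGroup Γ] (z : Γ ⧸ twoG Γ) : z + z = 0 := by
  induction z using QuotientAddGroup.induction_on with
  | H g =>
    rw [← QuotientAddGroup.mk_add, QuotientAddGroup.eq_zero_iff]
    exact ⟨g, by simp [zsmulAddGroupHom_apply, two_zsmul]⟩

/-- in an irreducible NIM-rep of `GLM(Γ, δ)`, the support of the action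
of `X_x` on any `ℓ` is contained in a single `2Γ`-orbit. -/
theorem stmt8 (Γ : Type*) [AddCommGroup Γ] [Fintype Γ] (hΓ : Even (Fintype.card Γ))
    (δ : Γ ⧸ twoG Γ) (L : Type*) [Fintype L] [Nonempty L] [AddAction Γ L]
    (M : GLMNimRep Γ δ L) (hirr : M.Irreducible)
    (x : Γ ⧸ twoG Γ) (ℓ ℓ' ℓ'' : L)
    (h' : 0 < M.N x ℓ ℓ') (h'' : 0 < M.N x ℓ ℓ'') :
    sameTwoOrbit Γ ℓ' ℓ'' := by
  have key := M.fusion x (x + δ) ℓ' ℓ''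
  have hterm : 0 < M.N (x + δ) ℓ' ℓ * M.N x ℓ ℓ'' := by
    rw [← M.dual_symm]
    exact Nat.mul_pos h' h''
  have hsum : 0 < ∑ t : L, M.N (x + δ) ℓ' t * M.N x t ℓ'' :=
    lt_of_lt_of_le hterm (Finset.single_le_sum (f := fun t => M.N (x + δ) ℓ' t * M.N x t ℓ'') (fun t _ => Nat.zero_le _)
      (Finset.mem_univ ℓ))
  rw [key] at hsum
  obtain ⟨⟨s, hs1, hs2⟩⟩ := (Nat.card_pos_iff.mp hsum).1
  refine ⟨s, ?_, hs2⟩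
  have hz : δ + x + (x + δ) = 0 := by
    have h1 := twoTorsion x
    have h2 := twoTorsion δ
    have : δ + x + (x + δ) = (x + x) + (δ + δ) := by abel
    rw [this, h1, h2, add_zero]
  rw [hz] at hs1
  exact (QuotientAddGroup.eq_zero_iff s).mp hs1
end

section
/- Let (L, •, N) be an irreducible NIM-rep of the fusion ring GLM(Γ, δ) and let x ∈ Γ/2Γ. If ℓ₁ and ℓ₂ lie in the same Γ-orbit of L, and ℓ'₁, ℓ'₂ ∈ L satisfy N_x(ℓ₁, ℓ'₁) > 0 and N_x(ℓ₂, ℓ'₂) > 0, then ℓ'₁ and ℓ'₂ lie in the same Γ-orbit of L. In other words, the support of the action of X_x on a whole Γ-orbit is contained in a single Γ-orbit. -/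
open scoped BigOperators

lemma twoG_self_add {Γ : Type*} [AddCommGroup Γ] (x : Γ ⧸ twoG Γ) : x + x = 0 := by
  induction x using QuotientAddGroup.induction_on with
  | H a =>
    rw [← QuotientAddGroup.mk_add, QuotientAddGroup.eq_zero_iff]
    exact ⟨a, two_zsmul a⟩

/-- in an irreducible NIM-rep of `GLM(Γ, δ)`, the support of the action
of `X_x` on a whole `Γ`-orbit is contained in a single `Γ`-orbit. -/
theorem stmt9 (Γ : Type*) [AddCommGroup Γ] [Fintype Γ] (hΓ : Even (Fintype.card Γ))
    (δ : Γ ⧸ twoG Γ) (L : Type*) [Fintype L] [Nonempty L] [AddAction Γ L]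
    (M : GLMNimRep Γ δ L) (hirr : M.Irreducible)
    (x : Γ ⧸ twoG Γ) (ℓ₁ ℓ₂ ℓ'₁ ℓ'₂ : L) (hsame : sameGOrbit Γ ℓ₁ ℓ₂)
    (h₁ : 0 < M.N x ℓ₁ ℓ'₁) (h₂ : 0 < M.N x ℓ₂ ℓ'₂) :
    sameGOrbit Γ ℓ'₁ ℓ'₂ := by
  obtain ⟨g, hg⟩ := hsame
  have key := M.fusion (x + QuotientAddGroup.mk g) (x + δ) ℓ'₁ ℓ'₂
  have hidx : δ + (x + QuotientAddGroup.mk g) + (x + δ) = QuotientAddGroup.mk g := by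
    have h1 := twoG_self_add x
    have h2 := twoG_self_add δ
    have : δ + (x + QuotientAddGroup.mk g) + (x + δ)
        = (x + x) + (δ + δ) + QuotientAddGroup.mk g := by abel
    rw [this, h1, h2]; abel
  rw [hidx] at key
  -- the term at t = ℓ₁ is positive
  have hterm : 0 < M.N (x + δ) ℓ'₁ ℓ₁ * M.N (x + QuotientAddGroup.mk g) ℓ₁ ℓ'₂ := by
    have e1 : M.N (x + δ) ℓ'₁ ℓ₁ = M.N x ℓ₁ ℓ'₁ := (M.dual_symm x ℓ₁ ℓ'₁).symm
    have e2 : M.N (x + QuotientAddGroup.mk g) ℓ₁ ℓ'₂ = M.N x ℓ₂ ℓ'₂ := by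
      rw [← M.vadd_left g x ℓ₁ ℓ'₂, hg]
    rw [e1, e2]
    exact Nat.mul_pos h₁ h₂
  have hsum : 0 < ∑ t : L, M.N (x + δ) ℓ'₁ t * M.N (x + QuotientAddGroup.mk g) t ℓ'₂ :=
    lt_of_lt_of_le hterm (Finset.single_le_sum (f := fun t => M.N (x + δ) ℓ'₁ t * M.N (x + QuotientAddGroup.mk g) t ℓ'₂) (fun t _ => Nat.zero_le _) (Finset.mem_univ ℓ₁))
  rw [key] at hsum
  have hne : Nonempty {s : Γ //
      (QuotientAddGroup.mk s : Γ ⧸ twoG Γ) = QuotientAddGroup.mk g ∧ s +ᵥ ℓ'₁ = ℓ'₂} :=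
    (Nat.card_ne_zero.mp hsum.ne').1
  obtain ⟨⟨s, _, hs⟩⟩ := hne
  exact ⟨s, hs⟩
end

section
/- Let (L, •, N) be an irreducible NIM-rep of the fusion ring GLM(Γ, δ). Then the Γ-action on L has at most two orbits. -/
open scoped BigOperators

section Aux

variable {Γ : Type*} [AddCommGroup Γ] [Fintype Γ] {δ : Γ ⧸ twoG Γ}
  {L : Type*} [Fintype L] [AddAction Γ L] (M : GLMNimRep Γ δ L)

lemma sameGOrbit_refl (ℓ : L) : sameGOrbit Γ ℓ ℓ := ⟨0, zero_vadd _ _⟩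

lemma sameGOrbit_symm {ℓ ℓ' : L} (h : sameGOrbit Γ ℓ ℓ') : sameGOrbit Γ ℓ' ℓ := by
  obtain ⟨g, hg⟩ := h
  exact ⟨-g, by rw [← hg, ← add_vadd, neg_add_cancel, zero_vadd]⟩

lemma sameGOrbit_trans {a b c : L} (h : sameGOrbit Γ a b) (h' : sameGOrbit Γ b c) :
    sameGOrbit Γ a c := by
  obtain ⟨g, hg⟩ := h; obtain ⟨g', hg'⟩ := h'
  exact ⟨g' + g, by rw [add_vadd, hg, hg']⟩

/-- Key lemma A: every point has, via fusion with `s = 0`, a "neighbor". -/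
lemma exists_neighbor (ℓ : L) :
    ∃ (t : L) (x y : Γ ⧸ twoG Γ), 0 < M.N y ℓ t ∧ 0 < M.N x t ℓ := by
  have hf := M.fusion (-δ) 0 ℓ ℓ
  have hne : Nonempty {s : Γ //
      (QuotientAddGroup.mk s : Γ ⧸ twoG Γ) = δ + (-δ) + 0 ∧ s +ᵥ ℓ = ℓ} := by
    refine ⟨⟨0, ?_, zero_vadd _ _⟩⟩
    simp
  have hpos : 0 < ∑ t : L, M.N 0 ℓ t * M.N (-δ) t ℓ := by
    rw [hf]
    exact Nat.card_pos
  by_contra hcon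
  push_neg at hcon
  have : ∑ t : L, M.N 0 ℓ t * M.N (-δ) t ℓ = 0 := by
    refine Finset.sum_eq_zero fun t _ => ?_
    rcases Nat.eq_zero_or_pos (M.N 0 ℓ t) with h | h
    · rw [h, zero_mul]
    rcases Nat.eq_zero_or_pos (M.N (-δ) t ℓ) with h' | h'
    · rw [h', mul_zero]
    exact absurd (hcon t (-δ) 0 h) h'.not_ge
  omega

/-- Key lemma B: two N-neighbors of the same point lie in the same `Γ`-orbit. -/
lemma neighbors_sameGOrbit {ℓ m m' : L} {a b : Γ ⧸ twoG Γ}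
    (ha : 0 < M.N a ℓ m) (hb : 0 < M.N b ℓ m') : sameGOrbit Γ m m' := by
  have ha' : 0 < M.N (a + δ) m ℓ := by rw [← M.dual_symm]; exact ha
  have hf := M.fusion b (a + δ) m m'
  have hterm : 0 < M.N (a + δ) m ℓ * M.N b ℓ m' := Nat.mul_pos ha' hb
  have hsum : 0 < ∑ t : L, M.N (a + δ) m t * M.N b t m' :=
    lt_of_lt_of_le hterm (Finset.single_le_sum
      (f := fun t => M.N (a + δ) m t * M.N b t m')
      (fun t _ => Nat.zero_le _) (Finset.mem_univ ℓ))
  rw [hf] at hsum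
  obtain ⟨⟨s, _, hs⟩⟩ := Nat.card_pos_iff.mp hsum |>.1
  exact ⟨s, hs⟩

end Aux

/-- an irreducible NIM-rep of `GLM(Γ, δ)` has at most two `Γ`-orbits:
among any three points, two of them lie in the same `Γ`-orbit. -/
theorem stmt10 (Γ : Type*) [AddCommGroup Γ] [Fintype Γ] (hΓ : Even (Fintype.card Γ))
    (δ : Γ ⧸ twoG Γ) (L : Type*) [Fintype L] [Nonempty L] [AddAction Γ L]
    (M : GLMNimRep Γ δ L) (hirr : M.Irreducible) (ℓ₁ ℓ₂ ℓ₃ : L) :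
    sameGOrbit Γ ℓ₁ ℓ₂ ∨ sameGOrbit Γ ℓ₁ ℓ₃ ∨ sameGOrbit Γ ℓ₂ ℓ₃ := by
  obtain ⟨t₁, x₀, y₀, hy, hx⟩ := exists_neighbor M ℓ₁
  set S : Set L := {ℓ | sameGOrbit Γ ℓ₁ ℓ ∨ sameGOrbit Γ t₁ ℓ} with hS
  have hSuniv : S = Set.univ := by
    refine hirr S ⟨ℓ₁, Or.inl (sameGOrbit_refl ℓ₁)⟩ ?_ ?_
    · rintro g ℓ (⟨h, hh⟩ | ⟨h, hh⟩)
      · exact Or.inl ⟨g + h, by rw [add_vadd, hh]⟩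
      · exact Or.inr ⟨g + h, by rw [add_vadd, hh]⟩
    · rintro x ℓ ℓ' (⟨g, hg⟩ | ⟨g, hg⟩) hpos
      · have : 0 < M.N (x + QuotientAddGroup.mk g) ℓ₁ ℓ' := by
          rw [← M.vadd_left, hg]; exact hpos
        exact Or.inr (neighbors_sameGOrbit M hy this)
      · have h1 : 0 < M.N (x + QuotientAddGroup.mk g) t₁ ℓ' := by
          rw [← M.vadd_left, hg]; exact hpos
        exact Or.inl (sameGOrbit_symm (neighbors_sameGOrbit M h1 hx))
  have h2 : ℓ₂ ∈ S := hSuniv ▸ Set.mem_univ ℓ₂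
  have h3 : ℓ₃ ∈ S := hSuniv ▸ Set.mem_univ ℓ₃
  rcases h2 with h2 | h2
  · exact Or.inl h2
  rcases h3 with h3 | h3
  · exact Or.inr (Or.inl h3)
  · exact Or.inr (Or.inr (sameGOrbit_trans (sameGOrbit_symm h2) h3))
end

section
/- Let (L, •, N) be an irreducible NIM-rep of the fusion ring GLM(Γ, δ), and let τ₀ be a map from the set of 2Γ-orbits of L to itself such that for every ℓ ∈ L and every ℓ' with N_{0̄}(ℓ, ℓ') > 0, the 2Γ-orbit of ℓ' is τ₀([ℓ]), where [ℓ] denotes the 2Γ-orbit of ℓ. Then: (i) τ₀(τ₀(O)) = d•O for every 2Γ-orbit O and every d ∈ Γ with d̄ = δ; and (ii) τ₀(g•O) = g•τ₀(O) for every g ∈ Γ and every 2Γ-orbit O. In particular τ₀ is a bijection. -/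
open scoped BigOperators

/-- The equivalence relation on `L` whose classes are the `2Γ`-orbits. -/
def twoOrbSetoid (Γ : Type*) [AddCommGroup Γ] (L : Type*) [AddAction Γ L] :
    Setoid L where
  r := sameTwoOrbit Γ
  iseqv := by
    refine ⟨fun ℓ => ⟨0, (twoG Γ).zero_mem, by simp⟩, ?_, ?_⟩
    · rintro a b ⟨g, hg, rfl⟩
      exact ⟨-g, neg_mem hg, by rw [← add_vadd]; simp⟩
    · rintro a b c ⟨g, hg, rfl⟩ ⟨h, hh, rfl⟩
      exact ⟨h + g, add_mem hh hg, (add_vadd h g a).symm ▸ rfl⟩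

/-- The set of `2Γ`-orbits of `L`. -/
abbrev TwoOrbits (Γ : Type*) [AddCommGroup Γ] (L : Type*) [AddAction Γ L] :=
  Quotient (twoOrbSetoid Γ L)

/-- The action of `g ∈ Γ` on the set of `2Γ`-orbits, `O ↦ g • O`. -/
def orbVAdd {Γ : Type*} [AddCommGroup Γ] {L : Type*} [AddAction Γ L] (g : Γ) :
    TwoOrbits Γ L → TwoOrbits Γ L :=
  Quotient.map (fun ℓ => g +ᵥ ℓ)
    (by
      rintro a b ⟨h, hh, rfl⟩
      exact ⟨h, hh, by
        show h +ᵥ (g +ᵥ a) = g +ᵥ (h +ᵥ a)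
        rw [← add_vadd, ← add_vadd, add_comm]⟩)

lemma twoG_mk_add_self {Γ : Type*} [AddCommGroup Γ] (g : Γ) :
    (QuotientAddGroup.mk g : Γ ⧸ twoG Γ) + QuotientAddGroup.mk g = 0 := by
  rw [← QuotientAddGroup.mk_add, QuotientAddGroup.eq_zero_iff]
  exact ⟨g, two_zsmul g⟩

lemma exists_pos_N {Γ : Type*} [AddCommGroup Γ] [Fintype Γ] {δ : Γ ⧸ twoG Γ}
    {L : Type*} [Fintype L] [AddAction Γ L] (M : GLMNimRep Γ δ L) (ℓ : L) :
    ∃ t : L, 0 < M.N 0 ℓ t := by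
  have h := M.fusion (-δ) 0 ℓ ℓ
  have hne : Nonempty {s : Γ //
      (QuotientAddGroup.mk s : Γ ⧸ twoG Γ) = δ + (-δ) + 0 ∧ s +ᵥ ℓ = ℓ} :=
    ⟨0, by simp, zero_vadd _ _⟩
  have hpos : 0 < ∑ t : L, M.N 0 ℓ t * M.N (-δ) t ℓ := by
    rw [h]; exact Nat.card_pos
  obtain ⟨t, _, ht⟩ := Finset.exists_ne_zero_of_sum_ne_zero hpos.ne'
  exact ⟨t, Nat.pos_of_ne_zero fun h0 => ht (by simp [h0])⟩

lemma exists_lift_vadd {Γ : Type*} [AddCommGroup Γ] [Fintype Γ] {δ : Γ ⧸ twoG Γ}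
    {L : Type*} [Fintype L] [AddAction Γ L] (M : GLMNimRep Γ δ L)
    {ℓ t u : L} (h1 : 0 < M.N 0 ℓ t) (h2 : 0 < M.N 0 t u) :
    ∃ s : Γ, (QuotientAddGroup.mk s : Γ ⧸ twoG Γ) = δ ∧ s +ᵥ ℓ = u := by
  have h := M.fusion 0 0 ℓ u
  have hle : M.N 0 ℓ t * M.N 0 t u ≤ ∑ t' : L, M.N 0 ℓ t' * M.N 0 t' u :=
    Finset.single_le_sum (f := fun t' => M.N 0 ℓ t' * M.N 0 t' u) (fun _ _ => Nat.zero_le _) (Finset.mem_univ t)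
  have hpos : 0 < Nat.card {s : Γ //
      (QuotientAddGroup.mk s : Γ ⧸ twoG Γ) = δ + 0 + 0 ∧ s +ᵥ ℓ = u} := by
    rw [← h]; exact lt_of_lt_of_le (Nat.mul_pos h1 h2) hle
  obtain ⟨s, hs1, hs2⟩ := (Nat.card_pos_iff.mp hpos).1.some
  exact ⟨s, by simpa using hs1, hs2⟩

/-- for an irreducible NIM-rep of `GLM(Γ, δ)` and a map `τ₀` on the set
of `2Γ`-orbits describing the action of `X_{0̄}`, one has `τ₀² = (d • ·)` for any lift
`d` of `δ`, `τ₀` commutes with the `Γ`-action on orbits, and `τ₀` is a bijection. -/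
theorem stmt11 (Γ : Type*) [AddCommGroup Γ] [Fintype Γ] (hΓ : Even (Fintype.card Γ))
    (δ : Γ ⧸ twoG Γ) (L : Type*) [Fintype L] [Nonempty L] [AddAction Γ L]
    (M : GLMNimRep Γ δ L) (hirr : M.Irreducible)
    (τ₀ : TwoOrbits Γ L → TwoOrbits Γ L)
    (hτ : ∀ ℓ ℓ' : L, 0 < M.N 0 ℓ ℓ' →
      τ₀ (Quotient.mk (twoOrbSetoid Γ L) ℓ) = Quotient.mk (twoOrbSetoid Γ L) ℓ') :
    (∀ (O : TwoOrbits Γ L) (d : Γ), (QuotientAddGroup.mk d : Γ ⧸ twoG Γ) = δ →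
      τ₀ (τ₀ O) = orbVAdd d O) ∧
    (∀ (g : Γ) (O : TwoOrbits Γ L), τ₀ (orbVAdd g O) = orbVAdd g (τ₀ O)) ∧
    Function.Bijective τ₀ := by
  have hsq : ∀ (O : TwoOrbits Γ L) (d : Γ),
      (QuotientAddGroup.mk d : Γ ⧸ twoG Γ) = δ → τ₀ (τ₀ O) = orbVAdd d O := by
    intro O d hd
    induction O using Quotient.ind with
    | _ ℓ =>
      obtain ⟨t, ht⟩ := exists_pos_N M ℓ
      obtain ⟨u, hu⟩ := exists_pos_N M t
      rw [hτ ℓ t ht, hτ t u hu]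
      obtain ⟨s, hs1, hs2⟩ := exists_lift_vadd M ht hu
      refine (Quotient.sound ?_).symm
      refine ⟨s - d, ?_, ?_⟩
      · have : (QuotientAddGroup.mk (s - d) : Γ ⧸ twoG Γ) = 0 := by
          rw [QuotientAddGroup.mk_sub, hs1, hd, sub_self]
        exact (QuotientAddGroup.eq_zero_iff _).mp this
      · show (s - d) +ᵥ (d +ᵥ ℓ) = u
        rw [← add_vadd, sub_add_cancel, hs2]
  have hcomm : ∀ (g : Γ) (O : TwoOrbits Γ L),
      τ₀ (orbVAdd g O) = orbVAdd g (τ₀ O) := by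
    intro g O
    induction O using Quotient.ind with
    | _ ℓ =>
      obtain ⟨t, ht⟩ := exists_pos_N M ℓ
      have ht' : 0 < M.N 0 (g +ᵥ ℓ) (g +ᵥ t) := by
        rw [M.vadd_left, M.vadd_right, zero_add, twoG_mk_add_self]
        exact ht
      have h1 : orbVAdd g (Quotient.mk (twoOrbSetoid Γ L) ℓ) =
          Quotient.mk (twoOrbSetoid Γ L) (g +ᵥ ℓ) := rfl
      rw [h1, hτ _ _ ht', hτ ℓ t ht]
      rfl
  refine ⟨hsq, hcomm, ?_⟩
  obtain ⟨d, hd⟩ := QuotientAddGroup.mk_surjective δ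
  have hbij : Function.Bijective (fun O => τ₀ (τ₀ O) : TwoOrbits Γ L → TwoOrbits Γ L) := by
    have : (fun O => τ₀ (τ₀ O) : TwoOrbits Γ L → TwoOrbits Γ L) = orbVAdd d := by
      funext O; exact hsq O d hd
    rw [this]
    refine ⟨fun a b hab => ?_, fun O => ⟨orbVAdd (-d) O, ?_⟩⟩
    · have := congrArg (orbVAdd (-d)) hab
      induction a using Quotient.ind with
      | _ x =>
        induction b using Quotient.ind with
        | _ y =>
          simpa [orbVAdd, ← add_vadd] using this
    · induction O using Quotient.ind with
      | _ x =>
        show Quotient.mk _ (d +ᵥ (-d +ᵥ x)) = Quotient.mk _ x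
        rw [← add_vadd]; simp
  exact ⟨fun a b h => hbij.1 (congrArg τ₀ h), fun O => by
    obtain ⟨P, hP⟩ := hbij.2 O; exact ⟨τ₀ P, hP⟩⟩
end

section
/- Let (L, •, N) be an irreducible NIM-rep of the fusion ring GLM(Γ, δ). If x ∈ Γ/2Γ and ℓ, ℓ' ∈ L satisfy N_x(ℓ, ℓ') > 0, then N_x(ℓ, ℓ')² · |2Γ| = |Stab_Γ(ℓ) ∩ 2Γ| · |Stab_Γ(ℓ') ∩ 2Γ|, where Stab_Γ(ℓ) = {g ∈ Γ : g•ℓ = ℓ}. In particular |2Γ| divides |Stab_Γ(ℓ) ∩ 2Γ| · |Stab_Γ(ℓ') ∩ 2Γ| and the quotient is a perfect square; when L has a unique Γ-orbit with stabilizer H this says that |2Γ| divides |H ∩ 2Γ|². -/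
open scoped BigOperators

section Aux

variable {Γ : Type*} [AddCommGroup Γ] [Fintype Γ] {δ : Γ ⧸ twoG Γ}
  {L : Type*} [Fintype L] [AddAction Γ L] (M : GLMNimRep Γ δ L)

/-- Every element of `Γ/2Γ` has order dividing 2. -/
lemma quot_add_self (a : Γ ⧸ twoG Γ) : a + a = 0 := by
  induction a using QuotientAddGroup.induction_on with
  | H g =>
    rw [← QuotientAddGroup.mk_add, QuotientAddGroup.eq_zero_iff]
    exact ⟨g, by simp [zsmulAddGroupHom_apply, two_zsmul]⟩

/-- The set counted by the fusion rule at `0` for `ℓ' = ℓ` is `Stab(ℓ) ⊓ 2Γ`. -/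
lemma card_stab_aux (ℓ : L) :
    Nat.card {s : Γ // (QuotientAddGroup.mk s : Γ ⧸ twoG Γ) = 0 ∧ s +ᵥ ℓ = ℓ} =
      Nat.card (AddAction.stabilizer Γ ℓ ⊓ twoG Γ : AddSubgroup Γ) :=
  Nat.card_congr (Equiv.subtypeEquivRight fun s => by
    rw [AddSubgroup.mem_inf, QuotientAddGroup.eq_zero_iff, AddAction.mem_stabilizer_iff]
    tauto)

/-- Row orthonormality: the sum of squares of a row of `N x` equals the
cardinality of the stabilizer intersected with `2Γ`. -/
lemma row_norm (x : Γ ⧸ twoG Γ) (ℓ : L) :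
    ∑ t : L, M.N x ℓ t * M.N x ℓ t =
      Nat.card (AddAction.stabilizer Γ ℓ ⊓ twoG Γ : AddSubgroup Γ) := by
  have hfus := M.fusion (x + δ) x ℓ ℓ
  have h0 : δ + (x + δ) + x = 0 := by
    have : δ + (x + δ) + x = (δ + δ) + (x + x) := by abel
    rw [this, quot_add_self, quot_add_self, add_zero]
  rw [h0] at hfus
  rw [← card_stab_aux (Γ := Γ) ℓ, ← hfus]
  exact Finset.sum_congr rfl fun t _ => by rw [← M.dual_symm x ℓ t]

/-- Column orthogonality. -/
lemma col_orth (x : Γ ⧸ twoG Γ) (ℓ' z : L) :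
    ∑ t : L, M.N x t ℓ' * M.N x t z =
      Nat.card {s : Γ // (QuotientAddGroup.mk s : Γ ⧸ twoG Γ) = 0 ∧ s +ᵥ ℓ' = z} := by
  have hfus := M.fusion x (x + δ) ℓ' z
  have h0 : δ + x + (x + δ) = 0 := by
    have : δ + x + (x + δ) = (δ + δ) + (x + x) := by abel
    rw [this, quot_add_self, quot_add_self, add_zero]
  rw [h0] at hfus
  rw [← hfus]
  exact Finset.sum_congr rfl fun t _ => by rw [← M.dual_symm x t ℓ']

/-- If `z` is in the `2Γ`-orbit of `ℓ'`, then the fiber over `z` has the size of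
the stabilizer intersected with `2Γ`. -/
lemma fiber_count (ℓ' z : L) (s₀ : Γ)
    (h0 : (QuotientAddGroup.mk s₀ : Γ ⧸ twoG Γ) = 0) (hz : s₀ +ᵥ ℓ' = z) :
    Nat.card {s : Γ // (QuotientAddGroup.mk s : Γ ⧸ twoG Γ) = 0 ∧ s +ᵥ ℓ' = z} =
      Nat.card (AddAction.stabilizer Γ ℓ' ⊓ twoG Γ : AddSubgroup Γ) := by
  have h0' : s₀ ∈ twoG Γ := (QuotientAddGroup.eq_zero_iff s₀).mp h0
  refine Nat.card_congr ?_
  refine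
    { toFun := fun s => ⟨s.1 - s₀, ?_⟩
      invFun := fun g => ⟨g.1 + s₀, ?_⟩
      left_inv := fun s => Subtype.ext (by simp)
      right_inv := fun g => Subtype.ext (by simp) }
  · obtain ⟨s, hs1, hs2⟩ := s
    rw [AddSubgroup.mem_inf]
    constructor
    · rw [AddAction.mem_stabilizer_iff, sub_eq_add_neg, add_comm, add_vadd, hs2, ← hz,
        ← add_vadd, neg_add_cancel, zero_vadd]
    · exact AddSubgroup.sub_mem _ ((QuotientAddGroup.eq_zero_iff s).mp hs1) h0'
  · obtain ⟨g, hg⟩ := g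
    rw [AddSubgroup.mem_inf] at hg
    constructor
    · rw [QuotientAddGroup.eq_zero_iff]
      exact AddSubgroup.add_mem _ hg.2 h0'
    · rw [add_comm, add_vadd, hg.1, hz]

/-- The fibers over all `z : L` partition `2Γ`. -/
lemma sum_fibers (ℓ' : L) :
    ∑ z : L, Nat.card {s : Γ // (QuotientAddGroup.mk s : Γ ⧸ twoG Γ) = 0 ∧ s +ᵥ ℓ' = z} =
      Nat.card (twoG Γ) := by
  classical
  have e : {s : Γ // (QuotientAddGroup.mk s : Γ ⧸ twoG Γ) = 0} ≃
      Σ z : L, {s : Γ // (QuotientAddGroup.mk s : Γ ⧸ twoG Γ) = 0 ∧ s +ᵥ ℓ' = z} :=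
    { toFun := fun s => ⟨s.1 +ᵥ ℓ', s.1, s.2, rfl⟩
      invFun := fun p => ⟨p.2.1, p.2.2.1⟩
      left_inv := fun s => rfl
      right_inv := fun p => by
        obtain ⟨z, s, hs1, hs2⟩ := p
        subst hs2
        rfl }
  have h1 : Nat.card (twoG Γ) =
      Nat.card {s : Γ // (QuotientAddGroup.mk s : Γ ⧸ twoG Γ) = 0} :=
    Nat.card_congr (Equiv.subtypeEquivRight fun s =>
      ((QuotientAddGroup.eq_zero_iff s).symm))
  rw [h1, Nat.card_congr e, Nat.card_eq_fintype_card, Fintype.card_sigma]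
  exact Finset.sum_congr rfl fun z _ => Nat.card_eq_fintype_card

end Aux

/-- if `N_x(ℓ,ℓ') > 0` in an irreducible NIM-rep of `GLM(Γ, δ)`, then
`N_x(ℓ,ℓ')² · |2Γ| = |Stab_Γ(ℓ) ∩ 2Γ| · |Stab_Γ(ℓ') ∩ 2Γ|`; in particular `|2Γ|`
divides this product of intersections and the quotient is a perfect square. -/
theorem stmt16 (Γ : Type*) [AddCommGroup Γ] [Fintype Γ] (hΓ : Even (Fintype.card Γ))
    (δ : Γ ⧸ twoG Γ) (L : Type*) [Fintype L] [Nonempty L] [AddAction Γ L]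
    (M : GLMNimRep Γ δ L) (hirr : M.Irreducible)
    (x : Γ ⧸ twoG Γ) (ℓ ℓ' : L) (h : 0 < M.N x ℓ ℓ') :
    (M.N x ℓ ℓ') ^ 2 * Nat.card (twoG Γ) =
      Nat.card (AddAction.stabilizer Γ ℓ ⊓ twoG Γ : AddSubgroup Γ) *
        Nat.card (AddAction.stabilizer Γ ℓ' ⊓ twoG Γ : AddSubgroup Γ) ∧
    Nat.card (twoG Γ) ∣
      Nat.card (AddAction.stabilizer Γ ℓ ⊓ twoG Γ : AddSubgroup Γ) *
        Nat.card (AddAction.stabilizer Γ ℓ' ⊓ twoG Γ : AddSubgroup Γ) ∧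
    IsSquare ((Nat.card (AddAction.stabilizer Γ ℓ ⊓ twoG Γ : AddSubgroup Γ) *
        Nat.card (AddAction.stabilizer Γ ℓ' ⊓ twoG Γ : AddSubgroup Γ)) /
      Nat.card (twoG Γ)) := by
  classical
  set n := M.N x ℓ ℓ' with hn
  set A := Nat.card (AddAction.stabilizer Γ ℓ ⊓ twoG Γ : AddSubgroup Γ) with hA
  set B := Nat.card (AddAction.stabilizer Γ ℓ' ⊓ twoG Γ : AddSubgroup Γ) with hB
  set G2 := Nat.card (twoG Γ) with hG2
  set c : L → ℕ := fun z =>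
    Nat.card {s : Γ // (QuotientAddGroup.mk s : Γ ⧸ twoG Γ) = 0 ∧ s +ᵥ ℓ' = z} with hc
  -- if the fiber over z is nonempty then N x ℓ z = n and c z = B
  have key_pos : ∀ z : L, c z ≠ 0 → M.N x ℓ z = n ∧ c z = B := by
    intro z hcz
    have hne : Nonempty {s : Γ // (QuotientAddGroup.mk s : Γ ⧸ twoG Γ) = 0 ∧ s +ᵥ ℓ' = z} := by
      by_contra hno
      rw [not_nonempty_iff] at hno
      exact hcz Nat.card_of_isEmpty
    obtain ⟨s₀, hs0, hsz⟩ := hne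
    constructor
    · rw [← hsz, M.vadd_right, hs0, add_zero]
    · exact fiber_count ℓ' z s₀ hs0 hsz
  -- if the fiber over z is empty then N x ℓ z = 0
  have key_zero : ∀ z : L, c z = 0 → M.N x ℓ z = 0 := by
    intro z hcz
    by_contra hne
    have hpos : 0 < ∑ t : L, M.N x t ℓ' * M.N x t z :=
      Finset.sum_pos' (fun t _ => Nat.zero_le _)
        ⟨ℓ, Finset.mem_univ ℓ, Nat.mul_pos h (Nat.pos_of_ne_zero hne)⟩
    rw [col_orth M x ℓ' z] at hpos
    exact absurd hcz (Nat.pos_iff_ne_zero.mp hpos)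
  -- the main computation
  have hmain : A * B = n * n * G2 := by
    have step : ∀ z : L, (M.N x ℓ z * M.N x ℓ z) * B = n * n * c z := by
      intro z
      rcases eq_or_ne (c z) 0 with hz | hz
      · rw [key_zero z hz, hz]; simp
      · obtain ⟨h1, h2⟩ := key_pos z hz
        rw [h1, h2]
    calc A * B = (∑ t : L, M.N x ℓ t * M.N x ℓ t) * B := by rw [row_norm M x ℓ]
    _ = ∑ t : L, (M.N x ℓ t * M.N x ℓ t) * B := by rw [Finset.sum_mul]
    _ = ∑ t : L, n * n * c t := Finset.sum_congr rfl fun t _ => step t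
    _ = n * n * ∑ t : L, c t := by rw [Finset.mul_sum]
    _ = n * n * G2 := by rw [show ∑ t : L, c t = G2 from sum_fibers ℓ']
  have hG2pos : 0 < G2 := Nat.card_pos
  have heq : n ^ 2 * G2 = A * B := by rw [hmain, pow_two]
  refine ⟨heq, ⟨n ^ 2, by rw [← heq, Nat.mul_comm]⟩, ?_⟩
  rw [← heq, Nat.mul_div_cancel _ hG2pos]
  exact ⟨n, (pow_two n)⟩
end

section
/- Let (L, •, N) be an irreducible NIM-rep of the fusion ring GLM(Γ, δ) whose Γ-action has exactly two orbits. Then no non-invertible basis element has a self-loop: N_x(ℓ, ℓ') = 0 for every x ∈ Γ/2Γ and all ℓ, ℓ' lying in the same Γ-orbit; in particular N_x(ℓ, ℓ) = 0 for every x ∈ Γ/2Γ and every ℓ ∈ L. -/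
open scoped BigOperators

/-- in an irreducible NIM-rep of `GLM(Γ, δ)` with exactly two
`Γ`-orbits, no non-invertible basis element has a self-loop: `N_x(ℓ,ℓ') = 0`
whenever `ℓ, ℓ'` lie in the same `Γ`-orbit; in particular `N_x(ℓ,ℓ) = 0`. -/
theorem stmt18 (Γ : Type*) [AddCommGroup Γ] [Fintype Γ] (hΓ : Even (Fintype.card Γ))
    (δ : Γ ⧸ twoG Γ) (L : Type*) [Fintype L] [Nonempty L] [AddAction Γ L]
    (M : GLMNimRep Γ δ L) (hirr : M.Irreducible)
    (ℓ₁ ℓ₂ : L) (hne : ¬ sameGOrbit Γ ℓ₁ ℓ₂)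
    (hcov : ∀ ℓ : L, sameGOrbit Γ ℓ₁ ℓ ∨ sameGOrbit Γ ℓ₂ ℓ) :
    (∀ (x : Γ ⧸ twoG Γ) (ℓ ℓ' : L), sameGOrbit Γ ℓ ℓ' → M.N x ℓ ℓ' = 0) ∧
    (∀ (x : Γ ⧸ twoG Γ) (ℓ : L), M.N x ℓ ℓ = 0) := by

  classical
  -- `m` and `b` in the same orbit of `p` gives a translation
  have orbitTrans : ∀ (p a b : L), sameGOrbit Γ p a → sameGOrbit Γ p b →
      ∃ h : Γ, h +ᵥ a = b := by
    rintro p a b ⟨g, rfl⟩ ⟨g', rfl⟩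
    exact ⟨g' - g, by rw [← add_vadd, sub_add_cancel]⟩
  set S : Set L := {ℓ | sameGOrbit Γ ℓ₁ ℓ} with hSdef
  have hS1 : S.Nonempty := ⟨ℓ₁, ⟨0, zero_vadd _ _⟩⟩
  have hS2 : ∀ (g : Γ) (ℓ : L), ℓ ∈ S → g +ᵥ ℓ ∈ S := by
    rintro g ℓ ⟨k, rfl⟩
    exact ⟨g + k, add_vadd g k ℓ₁⟩
  -- a cross edge exists
  have hcross : ∃ (x : Γ ⧸ twoG Γ) (a b : L), a ∈ S ∧ 0 < M.N x a b ∧ b ∉ S := by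
    by_contra hc
    push_neg at hc
    have hcl : ∀ (x : Γ ⧸ twoG Γ) (a b : L), a ∈ S → 0 < M.N x a b → b ∈ S := by
      intro x a b ha hab
      by_contra hb
      exact hb (hc x a b ha hab)
    have := hirr S hS1 hS2 hcl
    apply hne
    have : ℓ₂ ∈ S := this ▸ Set.mem_univ ℓ₂
    exact this
  obtain ⟨x, a, b, haS, hab, hbS⟩ := hcross
  have hb2 : sameGOrbit Γ ℓ₂ b := (hcov b).resolve_left hbS
  have ha1 : sameGOrbit Γ ℓ₁ a := haS
  -- key: no self-loops
  have key : ∀ (y : Γ ⧸ twoG Γ) (m : L), M.N y m m = 0 := by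
    intro y m
    by_contra hzero
    have hy : 0 < M.N y m m := Nat.pos_of_ne_zero hzero
    rcases hcov m with hm1 | hm2
    · -- m in orbit of ℓ₁; translate the cross edge a → b to m → b
      obtain ⟨h, hh⟩ := orbitTrans ℓ₁ a m ha1 hm1
      have hx' : 0 < M.N (x - QuotientAddGroup.mk h) m b := by
        rw [← hh, M.vadd_left, sub_add_cancel]
        exact hab
      have hf := M.fusion (x - QuotientAddGroup.mk h) y m b
      have hempty : IsEmpty {s : Γ //
          (QuotientAddGroup.mk s : Γ ⧸ twoG Γ) = δ + (x - QuotientAddGroup.mk h) + y ∧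
            s +ᵥ m = b} := by
        constructor
        rintro ⟨s, -, hs⟩
        exact hbS (hs ▸ hS2 s m hm1)
      rw [Nat.card_of_isEmpty] at hf
      have hterm := (Finset.sum_eq_zero_iff.mp hf) m (Finset.mem_univ m)
      have := Nat.mul_pos hy hx'
      omega
    · -- m in orbit of ℓ₂; use the dual edge b → a, translate to m → a
      have hba : 0 < M.N (x + δ) b a := by
        rw [← M.dual_symm]; exact hab
      obtain ⟨h, hh⟩ := orbitTrans ℓ₂ b m hb2 hm2
      have hx' : 0 < M.N (x + δ - QuotientAddGroup.mk h) m a := by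
        rw [← hh, M.vadd_left, sub_add_cancel]
        exact hba
      have hf := M.fusion (x + δ - QuotientAddGroup.mk h) y m a
      have hempty : IsEmpty {s : Γ //
          (QuotientAddGroup.mk s : Γ ⧸ twoG Γ) = δ + (x + δ - QuotientAddGroup.mk h) + y ∧
            s +ᵥ m = a} := by
        constructor
        rintro ⟨s, -, hs⟩
        -- then a would be in the orbit of ℓ₂, so ℓ₁ and ℓ₂ would share an orbit
        obtain ⟨k, hk⟩ := hm2
        obtain ⟨g, hg⟩ := ha1
        apply hne
        have h1 : (-s) +ᵥ a = m := by rw [← hs, ← add_vadd, neg_add_cancel, zero_vadd]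
        have h2 : (-k) +ᵥ m = ℓ₂ := by rw [← hk, ← add_vadd, neg_add_cancel, zero_vadd]
        exact ⟨-k + (-s + g), by rw [add_vadd, add_vadd, hg, h1, h2]⟩
      rw [Nat.card_of_isEmpty] at hf
      have hterm := (Finset.sum_eq_zero_iff.mp hf) m (Finset.mem_univ m)
      have := Nat.mul_pos hy hx'
      omega
  refine ⟨?_, fun x ℓ => key x ℓ⟩
  rintro x ℓ ℓ' ⟨g, rfl⟩
  rw [M.vadd_right]
  exact key _ ℓ
end

section
/- Every irreducible NIM-rep (L, •, N) of the fusion ring GLM(Γ, δ) is admissible: there exists ℓ₀ ∈ L such that for every ℓ ∈ L, either ℓ lies in the Γ-orbit of ℓ₀, or N_x(ℓ₀, ℓ) > 0 for some x ∈ Γ/2Γ. -/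
open scoped BigOperators

/-- every irreducible NIM-rep of `GLM(Γ, δ)` is admissible. -/
theorem stmt19 (Γ : Type*) [AddCommGroup Γ] [Fintype Γ] (hΓ : Even (Fintype.card Γ))
    (δ : Γ ⧸ twoG Γ) (L : Type*) [Fintype L] [Nonempty L] [AddAction Γ L]
    (M : GLMNimRep Γ δ L) (hirr : M.Irreducible) :
    ∃ ℓ₀ : L, ∀ ℓ : L,
      sameGOrbit Γ ℓ₀ ℓ ∨ ∃ x : Γ ⧸ twoG Γ, 0 < M.N x ℓ₀ ℓ := by
  obtain ⟨ℓ₀⟩ := (inferInstance : Nonempty L)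
  refine ⟨ℓ₀, ?_⟩
  set S : Set L := {ℓ | sameGOrbit Γ ℓ₀ ℓ ∨ ∃ x : Γ ⧸ twoG Γ, 0 < M.N x ℓ₀ ℓ} with hS
  have hne : S.Nonempty := ⟨ℓ₀, Or.inl ⟨0, by simp⟩⟩
  have hvadd : ∀ (g : Γ) (ℓ : L), ℓ ∈ S → g +ᵥ ℓ ∈ S := by
    rintro g ℓ (⟨h, hh⟩ | ⟨x, hx⟩)
    · exact Or.inl ⟨g + h, by rw [← hh, add_vadd]⟩
    · refine Or.inr ⟨x - QuotientAddGroup.mk g, ?_⟩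
      rw [M.vadd_right]
      simpa using hx
  have hsupp : ∀ (x : Γ ⧸ twoG Γ) (ℓ ℓ' : L), ℓ ∈ S → 0 < M.N x ℓ ℓ' → ℓ' ∈ S := by
    rintro x ℓ ℓ' (⟨g, hg⟩ | ⟨y, hy⟩) hpos
    · refine Or.inr ⟨x + QuotientAddGroup.mk g, ?_⟩
      rw [← M.vadd_left, hg]
      exact hpos
    · have hsum : 0 < ∑ t : L, M.N y ℓ₀ t * M.N x t ℓ' := by
        refine Finset.sum_pos' (fun t _ => Nat.zero_le _) ⟨ℓ, Finset.mem_univ ℓ, ?_⟩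
        exact Nat.mul_pos hy hpos
      rw [M.fusion] at hsum
      have : Nonempty {s : Γ //
          (QuotientAddGroup.mk s : Γ ⧸ twoG Γ) = δ + x + y ∧ s +ᵥ ℓ₀ = ℓ'} :=
        (Nat.card_pos_iff.mp hsum).1
      obtain ⟨s, _, hs⟩ := this
      exact Or.inl ⟨s, hs⟩
  have := hirr S hne hvadd hsupp
  intro ℓ
  have hℓ : ℓ ∈ S := this ▸ Set.mem_univ ℓ
  exact hℓ
end
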